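/- arXiv:1707.03590 — 12 statements merged into one kernel-verified Lean document; each statement's English description precedes it below -/
import Mathlib

section
/- Let W > 0. Then the (improper) integral ∫ over z ∈ (−1,0) of √((1+z+W)/(1+z)) dz equals √(1+W) + W·log(1 + √(1+W)) − (1/2)·W·log W. In particular the integrand is integrable on (−1,0). -/
/-!
The function `F u = √(u (u + W)) + W log (√u + √(u + W))` is a primitive of `√((u + W) / u)`
on `u > 0` and, for `W > 0`, extends continuously to `u = 0` with `F 0 = (W / 2) log W`.
Since the integrand is nonnegative, the fundamental theorem of calculus for `F (1 + z)` on
`[-1, 0]` gives both the integrability and the value `F 1 - F 0`.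
-/

open MeasureTheory Real Set

noncomputable def sqrtDivPrimitive (W u : ℝ) : ℝ :=
  √(u * (u + W)) + W * log (√u + √(u + W))

theorem hasDerivAt_sqrtDivPrimitive {W u : ℝ} (hu : 0 < u) (huW : 0 < u + W) :
    HasDerivAt (sqrtDivPrimitive W) (√((u + W) / u)) u := by
  have ha : 0 < √u := sqrt_pos.2 hu
  have hb : 0 < √(u + W) := sqrt_pos.2 huW
  have hsqrt_u : HasDerivAt (√·) (1 / (2 * √u)) u := hasDerivAt_sqrt hu.ne'
  have hsqrt_uW : HasDerivAt (fun y => √(y + W)) (1 / (2 * √(u + W))) u :=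
    ((hasDerivAt_id' u).add_const W).sqrt huW.ne'
  have hprod : HasDerivAt (fun y => √(y * (y + W)))
      ((1 * (u + W) + u * 1) / (2 * √(u * (u + W)))) u :=
    ((hasDerivAt_id' u).mul ((hasDerivAt_id' u).add_const W)).sqrt (mul_pos hu huW).ne'
  have hlog : HasDerivAt (fun y => log (√y + √(y + W)))
      ((1 / (2 * √u) + 1 / (2 * √(u + W))) / (√u + √(u + W))) u :=
    (hsqrt_u.add hsqrt_uW).log (add_pos ha hb).ne'
  refine (hprod.add (hlog.const_mul W)).congr_deriv ?_
  -- with `a = √u`, `b = √(u + W)`: `(a² + b²) / (2ab) + (b² - a²) / (2ab) = b / a`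
  rw [sqrt_div huW.le, sqrt_mul hu.le]
  have hWab : W = √(u + W) ^ 2 - √u ^ 2 := by rw [sq_sqrt huW.le, sq_sqrt hu.le]; ring
  have hu_sq : u = √u ^ 2 := (sq_sqrt hu.le).symm
  generalize √u = a, √(u + W) = b at *
  subst hWab hu_sq
  field_simp
  ring

theorem continuousOn_sqrtDivPrimitive {W : ℝ} (hW : 0 < W) :
    ContinuousOn (sqrtDivPrimitive W) (Ici 0) := by
  refine Continuous.continuousOn (by fun_prop) |>.add (continuousOn_const.mul ?_)
  refine ContinuousOn.log (Continuous.continuousOn (by fun_prop)) fun u hu => ?_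
  have : 0 < √(u + W) := sqrt_pos.2 (by linarith [mem_Ici.1 hu])
  positivity

theorem sqrtDivPrimitive_one_sub_zero {W : ℝ} (hW : 0 ≤ W) :
    sqrtDivPrimitive W 1 - sqrtDivPrimitive W 0 =
      √(1 + W) + W * log (1 + √(1 + W)) - (1 / 2) * W * log W := by
  simp only [sqrtDivPrimitive, one_mul, sqrt_one, zero_mul, sqrt_zero, zero_add, log_sqrt hW]
  ring

/-- For `W > 0`, the integrand `z ↦ √((1+z+W)/(1+z))` is integrable on `(−1,0)` and its
integral equals `√(1+W) + W·log(1 + √(1+W)) − (1/2)·W·log W`. -/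
theorem stmt_1 (W : ℝ) (hW : 0 < W) :
    IntegrableOn (fun z : ℝ => Real.sqrt ((1 + z + W) / (1 + z))) (Set.Ioo (-1 : ℝ) 0) volume ∧
    ∫ z in Set.Ioo (-1 : ℝ) 0, Real.sqrt ((1 + z + W) / (1 + z)) =
      Real.sqrt (1 + W) + W * Real.log (1 + Real.sqrt (1 + W))
        - (1 / 2) * W * Real.log W := by
  set G : ℝ → ℝ := fun z => sqrtDivPrimitive W (1 + z)
  have hG_cont : ContinuousOn G (Icc (-1) 0) :=
    (continuousOn_sqrtDivPrimitive hW).comp (by fun_prop) fun z hz => by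
      simpa [neg_le_iff_add_nonneg'] using hz.1
  have hG_deriv : ∀ z ∈ Ioo (-1 : ℝ) 0, HasDerivAt G (√((1 + z + W) / (1 + z))) z :=
    fun z hz => (hasDerivAt_sqrtDivPrimitive (by linarith [hz.1]) (by linarith [hz.1])).comp_const_add
      1 z
  have hint : IntegrableOn (fun z : ℝ => √((1 + z + W) / (1 + z))) (Ioc (-1) 0) :=
    intervalIntegral.integrableOn_deriv_of_nonneg hG_cont hG_deriv fun _ _ => sqrt_nonneg _
  refine ⟨hint.mono_set Ioo_subset_Ioc_self, ?_⟩
  rw [← integral_Ioc_eq_integral_Ioo, ← intervalIntegral.integral_of_le (by norm_num),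
    intervalIntegral.integral_eq_sub_of_hasDerivAt_of_le (by norm_num) hG_cont hG_deriv
      ((intervalIntegrable_iff_integrableOn_Ioc_of_le (by norm_num)).2 hint)]
  simpa [G] using sqrtDivPrimitive_one_sub_zero hW.le
end

section
/- Let W > 0, λ > 0, and −1 < a < 1. Suppose u : ℝ → ℝ is continuously differentiable on [a,1], twice differentiable on (a,1) with u''(x) = λ/(2·(1+u(x)+W)²) for all x ∈ (a,1), and satisfies u(a) = −1, u'(a) = 0, u(1) = 0, and u(x) > −1 for x ∈ (a,1]. Then λ > Λ_*(W)/4 and a = 1 − √(Λ_*(W)/λ). -/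
/-- `φ(r) = √(r(1−r)) + (1−r)^{3/2}·log(1+√r) − (1/2)(1−r)^{3/2}·log(1−r)`. -/
noncomputable def phi (r : ℝ) : ℝ :=
  Real.sqrt (r * (1 - r)) + (1 - r) ^ ((3 : ℝ) / 2) * Real.log (1 + Real.sqrt r)
    - (1 / 2) * (1 - r) ^ ((3 : ℝ) / 2) * Real.log (1 - r)

/-- `Λ_*(W) = (1+W)³·φ(1/(1+W))²`. -/
noncomputable def LambdaStar (W : ℝ) : ℝ := (1 + W) ^ 3 * (phi (1 / (1 + W))) ^ 2

/-!
Multiplying the equation by `2u'` and integrating from the touchdown point `a`, where `u = -1`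
and `u' = 0`, gives the energy identity `u'² = λ (1/W - 1/(1 + u + W))`; since `u'' ≥ 0` we have
`u' ≥ 0`, so `v = 1 + u` solves `v' = √(λ v / (W (v + W)))`. Separating variables with the
primitive `G = sqrtRatioPrimitive W` of `√((v + W) / v)` gives `G (1) - G (0) = √(λ / W) (1 - a)`,
and evaluating `G` explicitly turns this into `λ (1 - a)² = Λ_*(W)`. Both claims follow
because `0 < 1 - a < 2`.
-/

open Real Set

theorem sub_eq_mul_sub_of_hasDerivAt_const {f : ℝ → ℝ} {a b c : ℝ} (hab : a ≤ b)
    (hf : ContinuousOn f (Icc a b)) (hf' : ∀ x ∈ Ioo a b, HasDerivAt f c x) :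
    f b - f a = c * (b - a) := by
  rw [← intervalIntegral.integral_eq_sub_of_hasDerivAt_of_le hab hf hf' intervalIntegrable_const,
    intervalIntegral.integral_const, smul_eq_mul, mul_comm]

noncomputable def sqrtRatioPrimitive (W v : ℝ) : ℝ :=
  √(v * (v + W)) + W * log (√v + √(v + W))

theorem continuousOn_sqrtRatioPrimitive (W : ℝ) :
    ContinuousOn (sqrtRatioPrimitive W) (Ioi (-W)) := by
  refine (by fun_prop : Continuous fun v : ℝ => √(v * (v + W))).continuousOn.add
    (continuousOn_const.mul (ContinuousOn.log (by fun_prop) fun v hv => ?_))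
  have : 0 < √(v + W) := sqrt_pos.2 (by rw [mem_Ioi] at hv; linarith)
  positivity

theorem hasDerivAt_sqrtRatioPrimitive {W v : ℝ} (hv : 0 < v) (hvW : 0 < v + W) :
    HasDerivAt (sqrtRatioPrimitive W) (√(v + W) / √v) v := by
  have hA : 0 < √v := sqrt_pos.2 hv
  have hB : 0 < √(v + W) := sqrt_pos.2 hvW
  have hprod : HasDerivAt (fun v : ℝ => v * (v + W)) (1 * (v + W) + v * 1) v :=
    (hasDerivAt_id v).mul ((hasDerivAt_id v).add_const W)
  have hsum : HasDerivAt (fun v : ℝ => √v + √(v + W)) (1 / (2 * √v) + 1 / (2 * √(v + W))) v :=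
    ((hasDerivAt_id' v).sqrt hv.ne').add (((hasDerivAt_id' v).add_const W).sqrt hvW.ne')
  refine ((hprod.sqrt (mul_pos hv hvW).ne').add
    ((hsum.log (by positivity)).const_mul W)).congr_deriv ?_
  rw [sqrt_mul hv.le]
  have hB2 : √(v + W) ^ 2 = v + W := sq_sqrt hvW.le
  field_simp
  rw [hB2]
  ring

theorem lambdaStar_eq_sqrtRatioPrimitive {W : ℝ} (hW : 0 < W) :
    LambdaStar W = W * (sqrtRatioPrimitive W 1 - sqrtRatioPrimitive W 0) ^ 2 := by
  obtain ⟨t, ht, rfl⟩ : ∃ t, 0 < t ∧ W = t ^ 2 := ⟨√W, sqrt_pos.2 hW, (sq_sqrt hW.le).symm⟩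
  set s := √(1 + t ^ 2) with hs
  have hs0 : 0 < s := sqrt_pos.2 (by positivity)
  have hs2 : 1 + t ^ 2 = s ^ 2 := (sq_sqrt (by positivity)).symm
  have h1r : 1 - 1 / s ^ 2 = (t / s) ^ 2 := by field_simp; linarith
  have hphi : s ^ 3 * phi (1 / s ^ 2) = t * s + t ^ 3 * (log (1 + s) - log t) := by
    have hrpow : ((t / s) ^ 2) ^ ((3 : ℝ) / 2) = (t / s) ^ 3 := by
      rw [← rpow_natCast, ← rpow_mul (by positivity)]; norm_num
    have hsq : 1 / s ^ 2 * (t / s) ^ 2 = (t / s ^ 2) ^ 2 := by ring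
    have hroot : 1 + √(1 / s ^ 2) = (1 + s) / s := by
      rw [one_div, ← inv_pow, sqrt_sq (by positivity)]; field_simp; ring
    unfold phi
    rw [h1r, hrpow, hsq, sqrt_sq (by positivity), hroot, log_div (by positivity) hs0.ne',
      log_pow, log_div ht.ne' hs0.ne']
    field_simp
    push_cast
    ring
  have hG1 : sqrtRatioPrimitive (t ^ 2) 1 = s + t ^ 2 * log (1 + s) := by
    simp [sqrtRatioPrimitive, hs]
  have hG0 : sqrtRatioPrimitive (t ^ 2) 0 = t ^ 2 * log t := by
    simp [sqrtRatioPrimitive, sqrt_sq ht.le]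
  unfold LambdaStar
  rw [hs2, show (s ^ 2) ^ 3 * phi (1 / s ^ 2) ^ 2 = (s ^ 3 * phi (1 / s ^ 2)) ^ 2 by ring, hphi,
    hG1, hG0]
  ring

section Touchdown

variable {W lam a b : ℝ} {u u' : ℝ → ℝ}

theorem touchdown_energy (huc : ContinuousOn u (Icc a b))
    (hu : ∀ x ∈ Ioo a b, HasDerivAt u (u' x) x) (hu'c : ContinuousOn u' (Icc a b))
    (hu'' : ∀ x ∈ Ioo a b, HasDerivAt u' (lam / (2 * (1 + u x + W) ^ 2)) x)
    (hne : ∀ x ∈ Icc a b, 1 + u x + W ≠ 0) (hua : u a = -1) (hu'a : u' a = 0) :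
    ∀ x ∈ Icc a b, u' x ^ 2 = lam * (W⁻¹ - (1 + u x + W)⁻¹) := by
  intro x hx
  have hsub : Icc a x ⊆ Icc a b := Icc_subset_Icc_right hx.2
  have hconst := sub_eq_mul_sub_of_hasDerivAt_const (c := 0)
    (f := fun y => u' y ^ 2 - lam * (W⁻¹ - (1 + u y + W)⁻¹)) hx.1 ?_ fun y hy => ?_
  · simpa [hua, hu'a, sub_eq_zero] using hconst
  · exact ((hu'c.mono hsub).pow 2).sub (continuousOn_const.mul (continuousOn_const.sub
      (((continuousOn_const.add (huc.mono hsub)).add continuousOn_const).inv₀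
        fun y hy => hne y (hsub hy))))
  · have hy' : y ∈ Ioo a b := Ioo_subset_Ioo_right hx.2 hy
    refine (((hu'' y hy').pow 2).sub ((((((hu y hy').const_add 1).add_const W).inv
      (hne y (Ioo_subset_Icc_self hy'))).const_sub W⁻¹).const_mul lam)).congr_deriv ?_
    field_simp [hne y (Ioo_subset_Icc_self hy')]
    ring

theorem touchdown_deriv_nonneg (hlam : 0 ≤ lam) (hu'c : ContinuousOn u' (Icc a b))
    (hu'' : ∀ x ∈ Ioo a b, HasDerivAt u' (lam / (2 * (1 + u x + W) ^ 2)) x) (hu'a : u' a = 0) :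
    ∀ x ∈ Icc a b, 0 ≤ u' x := by
  have hmono : MonotoneOn u' (Icc a b) :=
    monotoneOn_of_hasDerivWithinAt_nonneg (convex_Icc a b) hu'c
      (by rw [interior_Icc]; exact fun x hx => (hu'' x hx).hasDerivWithinAt)
      (by rw [interior_Icc]; intro x _; positivity)
  intro x hx
  rw [← hu'a]
  exact hmono (left_mem_Icc.2 (hx.1.trans hx.2)) hx hx.1

theorem touchdown_sqrtRatioPrimitive_sub (hW : 0 < W) (hlam : 0 ≤ lam) (hab : a ≤ b)
    (huc : ContinuousOn u (Icc a b)) (hu : ∀ x ∈ Ioo a b, HasDerivAt u (u' x) x)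
    (hu'c : ContinuousOn u' (Icc a b))
    (hu'' : ∀ x ∈ Ioo a b, HasDerivAt u' (lam / (2 * (1 + u x + W) ^ 2)) x)
    (hua : u a = -1) (hu'a : u' a = 0) (hgt : ∀ x ∈ Ioc a b, -1 < u x) :
    sqrtRatioPrimitive W (1 + u b) - sqrtRatioPrimitive W 0 = √(lam / W) * (b - a) := by
  have hpos : ∀ x ∈ Icc a b, 0 < 1 + u x + W := fun x hx => by
    rcases hx.1.eq_or_lt with rfl | hax
    · rw [hua]; linarith
    · linarith [hgt x ⟨hax, hx.2⟩]
  have henergy := touchdown_energy huc hu hu'c hu'' (fun x hx => (hpos x hx).ne') hua hu'a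
  have hnonneg := touchdown_deriv_nonneg hlam hu'c hu'' hu'a
  have hG := sub_eq_mul_sub_of_hasDerivAt_const (c := √(lam / W))
    (f := fun x => sqrtRatioPrimitive W (1 + u x)) hab
    ((continuousOn_sqrtRatioPrimitive W).comp (continuousOn_const.add huc) fun x hx => by
      simpa [mem_Ioi, neg_lt_iff_pos_add] using hpos x hx) fun y hy => ?_
  · simpa [hua] using hG
  have hy' := Ioo_subset_Icc_self hy
  have hv : 0 < 1 + u y := by linarith [hgt y ⟨hy.1, hy.2.le⟩]
  refine ((hasDerivAt_sqrtRatioPrimitive hv (hpos y hy')).comp y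
    ((hu y hy).const_add 1)).congr_deriv ?_
  rw [← sqrt_div' _ hv.le, ← sqrt_sq (hnonneg y hy'), ← sqrt_mul (by positivity),
    henergy y hy']
  congr 1
  field_simp
  ring

end Touchdown

/-- Necessary condition for the zipped shooting problem: `λ > Λ_*(W)/4` and
`a = 1 − √(Λ_*(W)/λ)`. -/
theorem stmt_3 (W lam a : ℝ) (hW : 0 < W) (hlam : 0 < lam)
    (ha : a ∈ Set.Ioo (-1 : ℝ) 1)
    (u u' : ℝ → ℝ)
    (hu : ∀ x ∈ Set.Icc a 1, HasDerivWithinAt u (u' x) (Set.Icc a 1) x)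
    (hu'c : ContinuousOn u' (Set.Icc a 1))
    (hu'' : ∀ x ∈ Set.Ioo a 1, HasDerivAt u' (lam / (2 * (1 + u x + W) ^ 2)) x)
    (hua : u a = -1) (hu'a : u' a = 0) (hu1 : u 1 = 0)
    (hgt : ∀ x ∈ Set.Ioc a 1, u x > -1) :
    lam > LambdaStar W / 4 ∧ a = 1 - Real.sqrt (LambdaStar W / lam) := by
  obtain ⟨ha₁, ha₂⟩ := ha
  have hG := touchdown_sqrtRatioPrimitive_sub hW hlam.le ha₂.le
    (fun x hx => (hu x hx).continuousWithinAt)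
    (fun x hx => (hu x (Ioo_subset_Icc_self hx)).hasDerivAt (Icc_mem_nhds hx.1 hx.2))
    hu'c hu'' hua hu'a hgt
  have hΛ : LambdaStar W = lam * (1 - a) ^ 2 := by
    rw [hu1, add_zero] at hG
    rw [lambdaStar_eq_sqrtRatioPrimitive hW, hG, mul_pow, sq_sqrt (by positivity)]
    field_simp
  have h1a : (1 - a) ^ 2 < 4 := by nlinarith
  refine ⟨by rw [hΛ]; nlinarith, ?_⟩
  rw [hΛ, mul_div_cancel_left₀ _ hlam.ne', sqrt_sq (by linarith)]
  ring
end

section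
/- Let W > 0 and λ > Λ_*(W)/4, and set a := 1 − √(Λ_*(W)/λ). Then a ∈ (−1,1) and there exists u : ℝ → ℝ that is continuously differentiable on [a,1], twice differentiable on (a,1) with u''(x) = λ/(2·(1+u(x)+W)²) for all x ∈ (a,1), and satisfies u(a) = −1, u'(a) = 0, u(1) = 0, and u(x) > −1 for x ∈ (a,1]. -/
open Real Set Filter

lemma exists_strictMono_hasDerivAt_leftInverse {g g' : ℝ → ℝ} {c : ℝ} (hc : 0 < c)
    (hg : ∀ s, HasDerivAt g (g' s) s) (hcg : ∀ s, c ≤ g' s) :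
    ∃ σ : ℝ → ℝ, StrictMono σ ∧ Function.LeftInverse σ g ∧
      ∀ x, HasDerivAt σ (g' (σ x))⁻¹ x := by
  have hdiff : Differentiable ℝ g := fun s => (hg s).differentiableAt
  have hlin : ∀ ⦃x y⦄, x ≤ y → c * (y - x) ≤ g y - g x :=
    mul_sub_le_image_sub_of_le_deriv hdiff fun s => (hg s).deriv ▸ hcg s
  have hmono : StrictMono g :=
    strictMono_of_hasDerivAt_pos hg fun s => hc.trans_le (hcg s)
  have htop : Tendsto g atTop atTop := by
    refine tendsto_atTop_mono' _ (eventually_ge_atTop 0 |>.mono fun y hy => ?_)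
      (tendsto_atTop_add_const_left _ (g 0) (tendsto_id.const_mul_atTop hc))
    linarith [hlin hy, show c * id y = c * (y - 0) by simp]
  have hbot : Tendsto g atBot atBot := by
    refine tendsto_atBot_mono' _ (eventually_le_atBot 0 |>.mono fun y hy => ?_)
      (tendsto_atBot_add_const_left _ (g 0) (tendsto_id.const_mul_atBot hc))
    linarith [hlin hy, show c * id y = c * (y - 0) by simp]
  let e := hmono.orderIsoOfSurjective g (hdiff.continuous.surjective htop hbot)
  refine ⟨e.symm, e.symm.strictMono, e.symm_apply_apply, fun x => ?_⟩
  exact HasDerivAt.of_local_left_inverse e.symm.continuous.continuousAt (hg _)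
    (hc.trans_le (hcg _)).ne' (Eventually.of_forall e.apply_symm_apply)

lemma hasDerivAt_sqrt_add_sq {W : ℝ} (hW : 0 < W) (s : ℝ) :
    HasDerivAt (fun s => √(W + s ^ 2)) (s / √(W + s ^ 2)) s := by
  have h := ((hasDerivAt_pow 2 s).const_add W).sqrt (by positivity)
  convert h using 1
  field_simp
  ring

noncomputable def shootingMap (W s : ℝ) : ℝ := s * √(W + s ^ 2) + W * arsinh (s / √W)

lemma shootingMap_zero (W : ℝ) : shootingMap W 0 = 0 := by simp [shootingMap]

lemma shootingMap_pos {W s : ℝ} (hW : 0 < W) (hs : 0 < s) : 0 < shootingMap W s := by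
  have : 0 < arsinh (s / √W) := arsinh_pos_iff.2 (by positivity)
  unfold shootingMap
  positivity

lemma hasDerivAt_shootingMap {W : ℝ} (hW : 0 < W) (s : ℝ) :
    HasDerivAt (shootingMap W) (2 * √(W + s ^ 2)) s := by
  have harsinh : √(1 + (s / √W) ^ 2) = √(W + s ^ 2) / √W := by
    rw [← sqrt_div' _ hW.le, div_pow, sq_sqrt hW.le]
    congr 1
    field_simp
  have h := ((hasDerivAt_id' s).mul (hasDerivAt_sqrt_add_sq hW s)).add
    (((hasDerivAt_arsinh (s / √W)).comp s ((hasDerivAt_id' s).div_const √W)).const_mul W)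
  refine h.congr_deriv ?_
  rw [harsinh]
  field_simp
  rw [sq_sqrt (by positivity)]
  ring

lemma rpow_three_halves {x : ℝ} (hx : 0 ≤ x) : x ^ ((3 : ℝ) / 2) = x * √x := by
  rw [show (3 : ℝ) / 2 = 1 + 1 / 2 by norm_num, rpow_one_add' hx (by norm_num), sqrt_eq_rpow]

lemma phi_one_div_one_add_mul {W : ℝ} (hW : 0 < W) :
    phi (1 / (1 + W)) * ((1 + W) * √(1 + W)) = √W * shootingMap W 1 := by
  unfold phi shootingMap
  rw [one_pow, one_mul, add_comm W 1]
  set t := √(1 + W)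
  set w := √W
  have ht2 : t ^ 2 = 1 + W := sq_sqrt (by positivity)
  have hw2 : w ^ 2 = W := sq_sqrt hW.le
  have htpos : 0 < t := by positivity
  have hwpos : 0 < w := sqrt_pos.2 hW
  have hsub : 1 - 1 / (1 + W) = (w / t) ^ 2 := by
    rw [div_pow, hw2, ht2]; field_simp; ring
  have hr : 1 / (1 + W) = (1 / t) ^ 2 := by rw [div_pow, ht2, one_pow]
  have harsinh : arsinh (1 / w) = log (1 + t) - log w := by
    rw [arsinh, div_pow, one_pow, show 1 + 1 / w ^ 2 = (t / w) ^ 2 by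
      rw [div_pow, ht2, hw2]; field_simp; ring]
    rw [sqrt_sq (by positivity), ← add_div, log_div (by positivity) hwpos.ne']
  have hlog : log (1 + √(1 / (1 + W))) = log (1 + t) - log t := by
    rw [hr, sqrt_sq (by positivity), add_comm, div_add_one htpos.ne',
      log_div (by positivity) htpos.ne']
  rw [hlog, hsub, rpow_three_halves (by positivity), sqrt_sq (by positivity), hr, ← mul_pow,
    sqrt_sq (by positivity), log_pow, log_div hwpos.ne' htpos.ne', harsinh, ← hw2]
  field_simp
  rw [ht2, ← hw2]
  push_cast
  ring

lemma lambdaStar_eq {W : ℝ} (hW : 0 < W) : LambdaStar W = W * shootingMap W 1 ^ 2 := by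
  have h := phi_one_div_one_add_mul hW
  have ht2 : √(1 + W) ^ 2 = 1 + W := sq_sqrt (by positivity)
  have hw2 : √W ^ 2 = W := sq_sqrt hW.le
  calc LambdaStar W = (phi (1 / (1 + W)) * ((1 + W) * √(1 + W))) ^ 2 := by
        rw [LambdaStar, mul_pow, mul_pow, ht2]; ring
    _ = W * shootingMap W 1 ^ 2 := by rw [h, mul_pow, hw2]

section Shooting

variable {W k : ℝ} {τ : ℝ → ℝ}

lemma hasDerivAt_sq_sub_one_of_shooting (hW : 0 < W) (hk : k ≠ 0)
    (hτ : ∀ x, HasDerivAt τ (k * (2 * √(W + τ x ^ 2)))⁻¹ x) (x : ℝ) :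
    HasDerivAt (fun x => τ x ^ 2 - 1) (τ x / (k * √(W + τ x ^ 2))) x := by
  refine (((hτ x).pow 2).sub_const 1).congr_deriv ?_
  field_simp
  norm_num

lemma hasDerivAt_slope_of_shooting (hW : 0 < W) (hk : k ≠ 0)
    (hτ : ∀ x, HasDerivAt τ (k * (2 * √(W + τ x ^ 2)))⁻¹ x) (x : ℝ) :
    HasDerivAt (fun x => τ x / (k * √(W + τ x ^ 2)))
      (W / k ^ 2 / (2 * (1 + (τ x ^ 2 - 1) + W) ^ 2)) x := by
  have hq2 : √(W + τ x ^ 2) ^ 2 = W + τ x ^ 2 := sq_sqrt (by positivity)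
  have h := (hτ x).div (((hasDerivAt_sqrt_add_sq hW (τ x)).comp x (hτ x)).const_mul k)
    (mul_ne_zero hk (sqrt_pos.2 (by positivity)).ne')
  refine h.congr_deriv ?_
  simp only [Function.comp_apply]
  rw [show 1 + (τ x ^ 2 - 1) + W = √(W + τ x ^ 2) ^ 2 by rw [hq2]; ring]
  field_simp
  rw [hq2]
  ring

end Shooting

/-- Sufficient condition: if `λ > Λ_*(W)/4` and `a = 1 − √(Λ_*(W)/λ)`, then `a ∈ (−1,1)`
and the zipped shooting problem has a solution. -/
theorem stmt_4 (W lam a : ℝ) (hW : 0 < W) (hlam : LambdaStar W / 4 < lam)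
    (hadef : a = 1 - Real.sqrt (LambdaStar W / lam)) :
    a ∈ Set.Ioo (-1 : ℝ) 1 ∧
    ∃ u u' : ℝ → ℝ,
      (∀ x ∈ Set.Icc a 1, HasDerivWithinAt u (u' x) (Set.Icc a 1) x) ∧
      ContinuousOn u' (Set.Icc a 1) ∧
      (∀ x ∈ Set.Ioo a 1, HasDerivAt u' (lam / (2 * (1 + u x + W) ^ 2)) x) ∧
      u a = -1 ∧ u' a = 0 ∧ u 1 = 0 ∧
      ∀ x ∈ Set.Ioc a 1, u x > -1 := by
  have hΛ := lambdaStar_eq hW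
  have hG : 0 < shootingMap W 1 := shootingMap_pos hW one_pos
  have hΛpos : 0 < LambdaStar W := hΛ ▸ mul_pos hW (pow_pos hG 2)
  have hlam0 : 0 < lam := (div_pos hΛpos four_pos).trans hlam
  set k := √(W / lam)
  have hk : 0 < k := sqrt_pos.2 (div_pos hW hlam0)
  have hkG : √(LambdaStar W / lam) = k * shootingMap W 1 := by
    rw [hΛ, mul_div_right_comm, sqrt_mul (div_nonneg hW.le hlam0.le), sqrt_sq hG.le]
  have hkG2 : (k * shootingMap W 1) ^ 2 < 4 := by
    rw [← hkG, sq_sqrt (div_pos hΛpos hlam0).le, div_lt_iff₀ hlam0]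
    linarith
  have hkG_lt : k * shootingMap W 1 < 2 := by nlinarith [mul_pos hk hG]
  obtain ⟨τ, hτmono, hτinv, hτ⟩ := exists_strictMono_hasDerivAt_leftInverse
    (g := fun s => a + k * shootingMap W s) (mul_pos hk (mul_pos two_pos (sqrt_pos.2 hW)))
    (fun s => ((hasDerivAt_shootingMap hW s).const_mul k).const_add a)
    (fun s => by gcongr; linarith [sq_nonneg s])
  have hτa : τ a = 0 := by simpa [shootingMap_zero] using hτinv 0
  have hτ1 : τ 1 = 1 := by simpa [hadef, hkG] using hτinv 1
  have hu := hasDerivAt_sq_sub_one_of_shooting hW hk.ne' hτ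
  have hu' := hasDerivAt_slope_of_shooting hW hk.ne' hτ
  have hWk : W / k ^ 2 = lam := by rw [sq_sqrt (div_nonneg hW.le hlam0.le)]; field_simp
  refine ⟨⟨by linarith [mul_pos hk hG], by linarith [mul_pos hk hG]⟩,
    fun x => τ x ^ 2 - 1, fun x => τ x / (k * √(W + τ x ^ 2)),
    fun x _ => (hu x).hasDerivWithinAt,
    continuous_iff_continuousAt.2 (fun x => (hu' x).continuousAt) |>.continuousOn,
    fun x _ => hWk ▸ hu' x, by simp [hτa], by simp [hτa], by simp [hτ1], fun x hx => ?_⟩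
  have : 0 < τ x := hτa ▸ hτmono hx.1
  show τ x ^ 2 - 1 > -1
  linarith [pow_pos this 2]
end

section
/- Let W > 0, λ > 0, and m ∈ (0,1]. Suppose u : ℝ → ℝ is continuously differentiable on [0,1], twice differentiable on (0,1) with u''(x) = λ/(2·(1+u(x)+W)²) for all x ∈ (0,1), and satisfies u(0) = −m, u'(0) = 0, u(1) = 0, and u(x) ≥ −m for x ∈ [0,1]. Then λ = (1+W)³·φ(m/(1+W))². -/
/-! With `v = 1 + u + W` and `a = 1 - m + W = v(0)`, the equation reads `v'' = λ / (2 v²)`, and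
`v ≥ a > 0` makes `v` strictly convex, hence strictly increasing on `(0, 1]` since `v'(0) = 0`.
Multiplying by `v'` gives the energy identity `v'² = λ (1/a - 1/v)`, i.e.
`√λ = √a · √(v / (v - a)) · v'`. Integrating over `[0, 1]`, `√λ = √a (G(1 + W) - G(a))` for an
antiderivative `G` of `√(v / (v - a))`, and this evaluates to `(1 + W)^{3/2} φ(m / (1 + W))`. -/

open Real Set

lemma eq_of_hasDerivAt_zero_Ioo {f : ℝ → ℝ} {a b : ℝ} (hab : a ≤ b)
    (hf : ContinuousOn f (Icc a b)) (hf' : ∀ x ∈ Ioo a b, HasDerivAt f 0 x) : f b = f a := by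
  rcases hab.eq_or_lt with rfl | hlt
  · rfl
  obtain ⟨c, -, hc⟩ := exists_hasDerivAt_eq_slope f (fun _ => 0) hlt hf hf'
  rw [eq_comm, div_eq_zero_iff, sub_eq_zero] at hc
  exact hc.resolve_right (sub_ne_zero.2 hlt.ne')

noncomputable def sqrtRatioAntideriv (a s : ℝ) : ℝ :=
  √(s * (s - a)) + a * log (√s + √(s - a))

lemma hasDerivAt_sqrtRatioAntideriv {a s : ℝ} (ha : 0 < a) (hs : a < s) :
    HasDerivAt (sqrtRatioAntideriv a) (√s / √(s - a)) s := by
  have hs0 : 0 < s := ha.trans hs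
  have hsa : 0 < s - a := sub_pos.2 hs
  have hprod : HasDerivAt (fun t => √(t * (t - a)))
      ((1 * (s - a) + s * 1) / (2 * √(s * (s - a)))) s :=
    ((hasDerivAt_id s).mul ((hasDerivAt_id s).sub_const a)).sqrt (mul_pos hs0 hsa).ne'
  have hsum : HasDerivAt (fun t => √t + √(t - a)) (1 / (2 * √s) + 1 / (2 * √(s - a))) s := by
    refine (((hasDerivAt_id s).sqrt hs0.ne').add
      (((hasDerivAt_id s).sub_const a).sqrt hsa.ne')).congr_deriv ?_
    simp
  refine (hprod.add ((hsum.log (by positivity)).const_mul a)).congr_deriv ?_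
  rw [sqrt_mul hs0.le]
  set p := √s
  set q := √(s - a)
  have hp : 0 < p := sqrt_pos.2 hs0
  have hq : 0 < q := sqrt_pos.2 hsa
  have hp2 : p ^ 2 = s := sq_sqrt hs0.le
  have hq2 : q ^ 2 = s - a := sq_sqrt hsa.le
  rw [← hq2, ← hp2, show a = p ^ 2 - q ^ 2 by rw [hp2, hq2]; ring]
  field_simp
  ring

lemma continuousOn_sqrtRatioAntideriv {a : ℝ} (ha : 0 < a) :
    ContinuousOn (sqrtRatioAntideriv a) (Ici a) := by
  refine (continuous_id.mul (continuous_sub_right a)).sqrt.continuousOn.add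
    (continuousOn_const.mul (ContinuousOn.log (by fun_prop) fun s hs => ?_))
  have : 0 < √a := sqrt_pos.2 ha
  linarith [sqrt_le_sqrt (show a ≤ s from hs), sqrt_nonneg (s - a)]

lemma sqrtRatioAntideriv_self {a : ℝ} (ha : 0 ≤ a) : sqrtRatioAntideriv a a = a * log a / 2 := by
  simp [sqrtRatioAntideriv, log_sqrt ha, mul_div_assoc]

lemma sqrt_mul_sqrtRatioAntideriv_sub_self {a b : ℝ} (ha : 0 < a) (hab : a < b) :
    √a * (sqrtRatioAntideriv a b - sqrtRatioAntideriv a a) = b * √b * phi ((b - a) / b) := by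
  have hb : 0 < b := ha.trans hab
  have hba : 0 < b - a := sub_pos.2 hab
  have hsb : 0 < √b := sqrt_pos.2 hb
  have hone_sub : 1 - (b - a) / b = a / b := by field_simp; ring
  have hrpow : (a / b) ^ ((3 : ℝ) / 2) = a / b * (√a / √b) := by
    rw [show (3 : ℝ) / 2 = 1 + 1 / 2 by norm_num, rpow_add (by positivity), rpow_one,
      ← sqrt_eq_rpow, sqrt_div ha.le]
  have hsqrt : √((b - a) / b * (a / b)) = √(b - a) * √a / b := by
    rw [div_mul_div_comm, sqrt_div (by positivity), sqrt_mul hba.le, sqrt_mul_self hb.le]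
  have hlog_add : log (1 + √((b - a) / b)) = log (√b + √(b - a)) - log b / 2 := by
    rw [sqrt_div hba.le, show 1 + √(b - a) / √b = (√b + √(b - a)) / √b by field_simp,
      log_div (by positivity) hsb.ne', log_sqrt hb.le]
  rw [phi, hone_sub, hrpow, hsqrt, hlog_add, log_div ha.ne' hb.ne', sqrtRatioAntideriv_self ha.le,
    sqrtRatioAntideriv, sqrt_mul hb.le, ← sq_sqrt hb.le, ← sq_sqrt ha.le]
  field_simp
  ring

namespace StationaryMEMS

variable {lam a : ℝ} {v v' : ℝ → ℝ}

lemma deriv_pos (hv'c : ContinuousOn v' (Icc 0 1))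
    (hv'' : ∀ x ∈ Ioo (0 : ℝ) 1, HasDerivAt v' (lam / (2 * v x ^ 2)) x) (hv'0 : v' 0 = 0)
    (hlam : 0 < lam) (ha : 0 < a) (hva : ∀ x ∈ Icc (0 : ℝ) 1, a ≤ v x) :
    ∀ x ∈ Ioc (0 : ℝ) 1, 0 < v' x := by
  have hmono : StrictMonoOn v' (Icc 0 1) := by
    refine strictMonoOn_of_hasDerivWithinAt_pos (convex_Icc 0 1) hv'c
      (f' := fun x => lam / (2 * v x ^ 2)) ?_ ?_ <;> rw [interior_Icc]
    · exact fun x hx => (hv'' x hx).hasDerivWithinAt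
    · intro x hx
      have := ha.trans_le (hva x (Ioo_subset_Icc_self hx))
      positivity
  intro x hx
  simpa [hv'0] using hmono (left_mem_Icc.2 zero_le_one) (Ioc_subset_Icc_self hx) hx.1

lemma lt_of_mem_Ioc (hv : ∀ x ∈ Icc (0 : ℝ) 1, HasDerivWithinAt v (v' x) (Icc 0 1) x)
    (hv'c : ContinuousOn v' (Icc 0 1))
    (hv'' : ∀ x ∈ Ioo (0 : ℝ) 1, HasDerivAt v' (lam / (2 * v x ^ 2)) x) (hv0 : v 0 = a)
    (hv'0 : v' 0 = 0) (hlam : 0 < lam) (ha : 0 < a) (hva : ∀ x ∈ Icc (0 : ℝ) 1, a ≤ v x) :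
    ∀ x ∈ Ioc (0 : ℝ) 1, a < v x := by
  have hmono : StrictMonoOn v (Icc 0 1) := by
    refine strictMonoOn_of_hasDerivWithinAt_pos (convex_Icc 0 1)
      (fun x hx => (hv x hx).continuousWithinAt)
      (fun x hx => (hv x (interior_subset hx)).mono interior_subset) ?_
    rw [interior_Icc]
    exact fun x hx => deriv_pos hv'c hv'' hv'0 hlam ha hva x (Ioo_subset_Ioc_self hx)
  intro x hx
  simpa [hv0] using hmono (left_mem_Icc.2 zero_le_one) (Ioc_subset_Icc_self hx) hx.1

lemma energy_eq (hv : ∀ x ∈ Icc (0 : ℝ) 1, HasDerivWithinAt v (v' x) (Icc 0 1) x)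
    (hv'c : ContinuousOn v' (Icc 0 1))
    (hv'' : ∀ x ∈ Ioo (0 : ℝ) 1, HasDerivAt v' (lam / (2 * v x ^ 2)) x) (hv0 : v 0 = a)
    (hv'0 : v' 0 = 0) (ha : 0 < a) (hva : ∀ x ∈ Icc (0 : ℝ) 1, a ≤ v x) :
    ∀ x ∈ Icc (0 : ℝ) 1, v' x ^ 2 = lam / a - lam / v x := by
  have hpos : ∀ y ∈ Icc (0 : ℝ) 1, v y ≠ 0 := fun y hy => (ha.trans_le (hva y hy)).ne'
  have hvc : ContinuousOn v (Icc 0 1) := fun y hy => (hv y hy).continuousWithinAt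
  intro x hx
  have hE : v' x ^ 2 / 2 + lam / 2 * (v x)⁻¹ = v' 0 ^ 2 / 2 + lam / 2 * (v 0)⁻¹ := by
    refine eq_of_hasDerivAt_zero_Ioo (f := fun y => v' y ^ 2 / 2 + lam / 2 * (v y)⁻¹) hx.1
      ((((hv'c.pow 2).div_const 2).add (continuousOn_const.mul (hvc.inv₀ hpos))).mono
        (Icc_subset_Icc_right hx.2)) fun y hy => ?_
    have hy1 : y ∈ Ioo (0 : ℝ) 1 := ⟨hy.1, hy.2.trans_le hx.2⟩
    have hvy : HasDerivAt v (v' y) y := (hv y (Ioo_subset_Icc_self hy1)).hasDerivAt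
      (Icc_mem_nhds hy1.1 hy1.2)
    have hvy0 := hpos y (Ioo_subset_Icc_self hy1)
    refine ((((hv'' y hy1).pow 2).div_const 2).add ((hvy.inv hvy0).const_mul _)).congr_deriv ?_
    field_simp
    ring
  rw [hv0, hv'0] at hE
  have hvx0 := hpos x hx
  field_simp at hE ⊢
  linarith

lemma sqrt_lam_eq (hv : ∀ x ∈ Icc (0 : ℝ) 1, HasDerivWithinAt v (v' x) (Icc 0 1) x)
    (hv'c : ContinuousOn v' (Icc 0 1))
    (hv'' : ∀ x ∈ Ioo (0 : ℝ) 1, HasDerivAt v' (lam / (2 * v x ^ 2)) x) (hv0 : v 0 = a)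
    (hv'0 : v' 0 = 0) (hlam : 0 < lam) (ha : 0 < a) (hva : ∀ x ∈ Icc (0 : ℝ) 1, a ≤ v x) :
    √lam = √a * (sqrtRatioAntideriv a (v 1) - sqrtRatioAntideriv a a) := by
  have hvc : ContinuousOn v (Icc 0 1) := fun y hy => (hv y hy).continuousWithinAt
  have hderiv : ∀ x ∈ Ioo (0 : ℝ) 1,
      HasDerivAt (fun x => √a * sqrtRatioAntideriv a (v x) - √lam * x) 0 x := by
    intro x hx
    have hxa : a < v x :=
      lt_of_mem_Ioc hv hv'c hv'' hv0 hv'0 hlam ha hva x (Ioo_subset_Ioc_self hx)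
    have hv'x : 0 < v' x := deriv_pos hv'c hv'' hv'0 hlam ha hva x (Ioo_subset_Ioc_self hx)
    have hvx : HasDerivAt v (v' x) x := (hv x (Ioo_subset_Icc_self hx)).hasDerivAt
      (Icc_mem_nhds hx.1 hx.2)
    have hsq : (√a * (√(v x) / √(v x - a) * v' x)) ^ 2 = lam := by
      rw [mul_pow, mul_pow, div_pow, sq_sqrt ha.le, sq_sqrt (ha.trans hxa).le,
        sq_sqrt (sub_pos.2 hxa).le,
        energy_eq hv hv'c hv'' hv0 hv'0 ha hva x (Ioo_subset_Icc_self hx)]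
      have := sub_pos.2 hxa
      have := (ha.trans hxa).ne'
      field_simp
    have hrate : √a * (√(v x) / √(v x - a) * v' x) = √lam := by
      rw [← hsq, sqrt_sq (by positivity)]
    refine ((((hasDerivAt_sqrtRatioAntideriv ha hxa).comp x hvx).const_mul √a).sub
      ((hasDerivAt_id x).const_mul √lam)).congr_deriv ?_
    simp [hrate]
  have hconst : √a * sqrtRatioAntideriv a (v 1) - √lam * 1
      = √a * sqrtRatioAntideriv a (v 0) - √lam * 0 := eq_of_hasDerivAt_zero_Ioo zero_le_one
    ((continuousOn_const.mul ((continuousOn_sqrtRatioAntideriv ha).comp hvc hva)).sub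
      (continuousOn_const.mul continuousOn_id)) hderiv
  rw [hv0] at hconst
  linarith

end StationaryMEMS

/-- Necessary condition for the unzipped shooting problem: `λ = (1+W)³·φ(m/(1+W))²`. -/
theorem stmt_6 (W lam m : ℝ) (hW : 0 < W) (hlam : 0 < lam)
    (hm : m ∈ Set.Ioc (0 : ℝ) 1)
    (u u' : ℝ → ℝ)
    (hu : ∀ x ∈ Set.Icc (0 : ℝ) 1, HasDerivWithinAt u (u' x) (Set.Icc (0 : ℝ) 1) x)
    (hu'c : ContinuousOn u' (Set.Icc (0 : ℝ) 1))
    (hu'' : ∀ x ∈ Set.Ioo (0 : ℝ) 1, HasDerivAt u' (lam / (2 * (1 + u x + W) ^ 2)) x)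
    (hu0 : u 0 = -m) (hu'0 : u' 0 = 0) (hu1 : u 1 = 0)
    (hge : ∀ x ∈ Set.Icc (0 : ℝ) 1, u x ≥ -m) :
    lam = (1 + W) ^ 3 * (phi (m / (1 + W))) ^ 2 := by
  obtain ⟨hm0, hm1⟩ := hm
  have hv : ∀ x ∈ Icc (0 : ℝ) 1,
      HasDerivWithinAt (fun y => 1 + u y + W) (u' x) (Icc 0 1) x :=
    fun x hx => ((hu x hx).const_add 1).add_const W
  have hsqrt := StationaryMEMS.sqrt_lam_eq (a := 1 - m + W) hv hu'c hu''
    (by rw [hu0]; ring) hu'0 hlam (by linarith) fun x hx => by linarith [hge x hx]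
  rw [hu1, add_zero, sqrt_mul_sqrtRatioAntideriv_sub_self (by linarith) (by linarith),
    show 1 + W - (1 - m + W) = m by ring] at hsqrt
  rw [← sq_sqrt hlam.le, hsqrt, mul_pow, mul_pow, sq_sqrt (by linarith)]
  ring
end

section
/- Let W > 0, λ > 0, and m ∈ (0,1] satisfy λ = (1+W)³·φ(m/(1+W))². Then there exists u : ℝ → ℝ that is continuously differentiable on [0,1], twice differentiable on (0,1) with u''(x) = λ/(2·(1+u(x)+W)²) for all x ∈ (0,1), and satisfies u(0) = −m, u'(0) = 0, u(1) = 0, and u(x) ≥ −m for x ∈ [0,1]. -/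
/-!
For `v = 1 + u + W` the equation reads `v'' = λ / (2 v²)`. Its solutions with
`v'(0) = 0` are `v = V cosh² θ`, where the phase `θ` is the inverse of
`x = (θ + sinh θ cosh θ) / L`, and then `λ = V³ L²`. With `r = m / (1 + W)` take
`V = (1 + W)(1 − r) = 1 + W − m` (so `u(0) = −m`) and let the phase end at `θ₁ = artanh √r`,
where `(1 − r) cosh² θ₁ = 1` (so `u(1) = 0`); the identity
`φ(r) = (1 − r)^{3/2} (θ₁ + sinh θ₁ cosh θ₁)` then turns `λ = V³ L²` into the hypothesis
on `λ`.
-/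

open Real Filter

lemma Real.hasDerivAt_tanh (x : ℝ) : HasDerivAt tanh (1 / cosh x ^ 2) x := by
  rw [show tanh = fun y => sinh y / cosh y from funext tanh_eq_sinh_div_cosh]
  refine ((hasDerivAt_sinh x).div (hasDerivAt_cosh x) (cosh_pos x).ne').congr_deriv ?_
  rw [← sq, ← sq, cosh_sq]
  ring

noncomputable def timeMap (θ : ℝ) : ℝ := θ + sinh θ * cosh θ

lemma hasDerivAt_timeMap (θ : ℝ) : HasDerivAt timeMap (2 * cosh θ ^ 2) θ := by
  refine ((hasDerivAt_id θ).add ((hasDerivAt_sinh θ).mul (hasDerivAt_cosh θ))).congr_deriv ?_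
  linear_combination sinh_sq θ

lemma continuous_timeMap : Continuous timeMap := by
  unfold timeMap
  fun_prop

lemma strictMono_timeMap : StrictMono timeMap :=
  strictMono_of_hasDerivAt_pos hasDerivAt_timeMap fun θ => by positivity

lemma surjective_timeMap : Function.Surjective timeMap := by
  refine continuous_timeMap.surjective ?_ ?_
  · refine tendsto_atTop_mono' _ ?_ tendsto_id
    filter_upwards [eventually_ge_atTop 0] with θ hθ
    have : 0 ≤ sinh θ * cosh θ := mul_nonneg (sinh_nonneg_iff.2 hθ) (cosh_pos θ).le
    simp only [id, timeMap]
    linarith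
  · refine tendsto_atBot_mono' _ ?_ tendsto_id
    filter_upwards [eventually_le_atBot 0] with θ hθ
    have : sinh θ * cosh θ ≤ 0 :=
      mul_nonpos_of_nonpos_of_nonneg (sinh_nonpos_iff.2 hθ) (cosh_pos θ).le
    simp only [id, timeMap]
    linarith

noncomputable def timeMapOrderIso : ℝ ≃o ℝ :=
  StrictMono.orderIsoOfSurjective timeMap strictMono_timeMap surjective_timeMap

lemma timeMap_timeMapOrderIso_symm (x : ℝ) : timeMap (timeMapOrderIso.symm x) = x :=
  StrictMono.orderIsoOfSurjective_self_symm_apply _ _ _ x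

lemma timeMapOrderIso_symm_timeMap (θ : ℝ) : timeMapOrderIso.symm (timeMap θ) = θ :=
  StrictMono.orderIsoOfSurjective_symm_apply_self _ _ _ θ

lemma timeMapOrderIso_symm_zero : timeMapOrderIso.symm 0 = 0 := by
  simpa [timeMap] using timeMapOrderIso_symm_timeMap 0

lemma hasDerivAt_timeMapOrderIso_symm (x : ℝ) :
    HasDerivAt timeMapOrderIso.symm (2 * cosh (timeMapOrderIso.symm x) ^ 2)⁻¹ x :=
  HasDerivAt.of_local_left_inverse timeMapOrderIso.symm.continuous.continuousAt
    (hasDerivAt_timeMap _) (by positivity) (Eventually.of_forall timeMap_timeMapOrderIso_symm)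

section CoshSqSolution

variable (V L : ℝ)

lemma hasDerivAt_timeMapOrderIso_symm_mul (x : ℝ) :
    HasDerivAt (fun y => timeMapOrderIso.symm (L * y))
      (L / (2 * cosh (timeMapOrderIso.symm (L * x)) ^ 2)) x := by
  refine ((hasDerivAt_timeMapOrderIso_symm (L * x)).comp x
    ((hasDerivAt_id x).const_mul L)).congr_deriv ?_
  simp only [mul_one]
  ring

lemma hasDerivAt_mul_cosh_sq_timeMapOrderIso_symm (x : ℝ) :
    HasDerivAt (fun y => V * cosh (timeMapOrderIso.symm (L * y)) ^ 2)
      (V * L * tanh (timeMapOrderIso.symm (L * x))) x := by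
  have hθ := hasDerivAt_timeMapOrderIso_symm_mul L x
  set θ := timeMapOrderIso.symm (L * x)
  refine ((((hasDerivAt_cosh θ).comp x hθ).pow 2).const_mul V).congr_deriv ?_
  have := (cosh_pos θ).ne'
  simp only [Function.comp_apply, tanh_eq_sinh_div_cosh]
  field_simp
  ring

variable {V} in
lemma hasDerivAt_mul_tanh_timeMapOrderIso_symm (hV : V ≠ 0) (x : ℝ) :
    HasDerivAt (fun y => V * L * tanh (timeMapOrderIso.symm (L * y)))
      (V ^ 3 * L ^ 2 / (2 * (V * cosh (timeMapOrderIso.symm (L * x)) ^ 2) ^ 2)) x := by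
  have hθ := hasDerivAt_timeMapOrderIso_symm_mul L x
  set θ := timeMapOrderIso.symm (L * x)
  refine (((hasDerivAt_tanh θ).comp x hθ).const_mul (V * L)).congr_deriv ?_
  have := (cosh_pos θ).ne'
  field_simp

end CoshSqSolution

lemma sqrt_mem_Ioo_neg_one_one {r : ℝ} (hr1 : r < 1) : √r ∈ Set.Ioo (-1) 1 :=
  ⟨by linarith [sqrt_nonneg r], (sqrt_lt' one_pos).2 (by linarith)⟩

section Endpoint

variable {r : ℝ} (hr0 : 0 ≤ r) (hr1 : r < 1)
include hr0 hr1

lemma one_sub_mul_cosh_artanh_sqrt_sq : (1 - r) * cosh (artanh √r) ^ 2 = 1 := by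
  rw [cosh_artanh (sqrt_mem_Ioo_neg_one_one hr1), sq_sqrt hr0, div_pow, sq_sqrt (by linarith)]
  field_simp [show 1 - r ≠ 0 by linarith]

lemma phi_eq_rpow_mul_timeMap_artanh_sqrt :
    phi r = (1 - r) ^ ((3 : ℝ) / 2) * timeMap (artanh √r) := by
  have hq := sqrt_mem_Ioo_neg_one_one hr1
  have hc : 0 < 1 - r := by linarith
  have hsc : 0 < √(1 - r) := sqrt_pos.2 hc
  have hrc : (1 + √r) / (1 - √r) = (1 + √r) ^ 2 / (1 - r) := by
    have : 1 - r = (1 - √r) * (1 + √r) := by nlinarith [sq_sqrt hr0]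
    rw [this]
    field_simp [show 1 - √r ≠ 0 by linarith [hq.2]]
  have hlog : artanh √r = log (1 + √r) - 1 / 2 * log (1 - r) := by
    rw [artanh_eq_half_log (Set.Ioo_subset_Icc_self hq), hrc,
      log_div (by nlinarith [hq.1]) hc.ne', log_pow]
    ring
  have h32 : (1 - r) ^ ((3 : ℝ) / 2) = (1 - r) * √(1 - r) := by
    rw [show (3 : ℝ) / 2 = 1 + 1 / 2 by norm_num, rpow_add hc, rpow_one, sqrt_eq_rpow]
  rw [phi, timeMap, sinh_artanh hq, cosh_artanh hq, sq_sqrt hr0, h32, hlog,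
    sqrt_mul hr0]
  field_simp
  rw [sq_sqrt hc.le]
  ring

end Endpoint

theorem stmt_7_general (W lam m : ℝ) (hW : 0 < W)
    (hm : m ∈ Set.Ioc (0 : ℝ) 1)
    (heq : lam = (1 + W) ^ 3 * (phi (m / (1 + W))) ^ 2) :
    ∃ u u' : ℝ → ℝ,
      (∀ x ∈ Set.Icc (0 : ℝ) 1, HasDerivWithinAt u (u' x) (Set.Icc (0 : ℝ) 1) x) ∧
      ContinuousOn u' (Set.Icc (0 : ℝ) 1) ∧
      (∀ x ∈ Set.Ioo (0 : ℝ) 1, HasDerivAt u' (lam / (2 * (1 + u x + W) ^ 2)) x) ∧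
      u 0 = -m ∧ u' 0 = 0 ∧ u 1 = 0 ∧
      ∀ x ∈ Set.Icc (0 : ℝ) 1, u x ≥ -m := by
  obtain ⟨hm0, hm1⟩ := hm
  set a := 1 + W
  set r := m / a
  have hr0 : 0 ≤ r := by positivity
  have hr1 : r < 1 := (div_lt_one (by positivity)).2 (by linarith)
  have hmr : m = a * r := (mul_div_cancel₀ m (by positivity : a ≠ 0)).symm
  set L := timeMap (artanh √r)
  set V := a * (1 - r)
  have hV : 0 < V := mul_pos (by positivity) (by linarith)
  have hlam : lam = V ^ 3 * L ^ 2 := by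
    rw [heq, phi_eq_rpow_mul_timeMap_artanh_sqrt hr0 hr1, mul_pow, ← rpow_natCast _ 2,
      ← rpow_mul (by linarith)]
    norm_num
    ring
  set Θ := fun x => timeMapOrderIso.symm (L * x)
  refine ⟨fun x => V * cosh (Θ x) ^ 2 - a, fun x => V * L * tanh (Θ x),
    fun x _ => ((hasDerivAt_mul_cosh_sq_timeMapOrderIso_symm V L x).sub_const a).hasDerivWithinAt,
    fun x _ =>
      (hasDerivAt_mul_tanh_timeMapOrderIso_symm L hV.ne' x).continuousAt.continuousWithinAt,
    fun x _ => ?_, ?_, by simp [Θ, timeMapOrderIso_symm_zero], ?_, fun x _ => ?_⟩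
  · refine (hasDerivAt_mul_tanh_timeMapOrderIso_symm L hV.ne' x).congr_deriv ?_
    simp only [hlam, Θ]
    ring
  · simp only [Θ, mul_zero, timeMapOrderIso_symm_zero, cosh_zero]
    rw [hmr]
    ring
  · simp only [Θ, mul_one, L, timeMapOrderIso_symm_timeMap, V, mul_assoc,
      one_sub_mul_cosh_artanh_sqrt_sq hr0 hr1]
    ring
  · have : 1 ≤ cosh (Θ x) ^ 2 := one_le_pow₀ (one_le_cosh _)
    rw [ge_iff_le, hmr]
    nlinarith

/-- Sufficient condition for the unzipped shooting problem: if `λ = (1+W)³·φ(m/(1+W))²`,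
then it has a solution with minimum `−m` at `x = 0`. -/
theorem stmt_7 (W lam m : ℝ) (hW : 0 < W) (hlam : 0 < lam)
    (hm : m ∈ Set.Ioc (0 : ℝ) 1)
    (heq : lam = (1 + W) ^ 3 * (phi (m / (1 + W))) ^ 2) :
    ∃ u u' : ℝ → ℝ,
      (∀ x ∈ Set.Icc (0 : ℝ) 1, HasDerivWithinAt u (u' x) (Set.Icc (0 : ℝ) 1) x) ∧
      ContinuousOn u' (Set.Icc (0 : ℝ) 1) ∧
      (∀ x ∈ Set.Ioo (0 : ℝ) 1, HasDerivAt u' (lam / (2 * (1 + u x + W) ^ 2)) x) ∧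
      u 0 = -m ∧ u' 0 = 0 ∧ u 1 = 0 ∧
      ∀ x ∈ Set.Icc (0 : ℝ) 1, u x ≥ -m :=
  stmt_7_general W lam m hW hm heq
end

section
/- There exists a unique r₀ ∈ (0,1) such that the derivative of φ vanishes at r₀, where φ(r) := √(r(1−r)) + (1−r)^{3/2}·log(1+√r) − (1/2)·(1−r)^{3/2}·log(1−r) for r ∈ (0,1). -/
open Real Set

noncomputable def psi (s : ℝ) : ℝ :=
  (2 - 3 * s ^ 2) / (2 * s * (1 - s ^ 2)) + (3 / 4) * log (1 - s) - (3 / 4) * log (1 + s)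

lemma hasDerivAt_psi {s : ℝ} (hs : s ∈ Ioo (0 : ℝ) 1) :
    HasDerivAt psi (-(1 / (s ^ 2 * (1 - s ^ 2) ^ 2))) s := by
  obtain ⟨h0, h1⟩ := hs
  have h1s : 1 - s ≠ 0 := by linarith
  have h1s' : 1 + s ≠ 0 := by linarith
  have h1s2 : 1 - s ^ 2 ≠ 0 := by nlinarith
  have hden : 2 * s * (1 - s ^ 2) ≠ 0 := by positivity
  have hnum : HasDerivAt (fun x : ℝ => 2 - 3 * x ^ 2) (-(3 * (2 * s))) s := by
    simpa using ((hasDerivAt_pow 2 s).const_mul 3).const_sub 2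
  have hden' : HasDerivAt (fun x : ℝ => 2 * x * (1 - x ^ 2)) (2 - 6 * s ^ 2) s :=
    (((hasDerivAt_id' s).const_mul 2).mul ((hasDerivAt_pow 2 s).const_sub 1)).congr_deriv (by ring)
  have hlog_sub := (((hasDerivAt_id' s).const_sub 1).log h1s).const_mul (3 / 4 : ℝ)
  have hlog_add := (((hasDerivAt_id' s).const_add 1).log h1s').const_mul (3 / 4 : ℝ)
  refine (((hnum.div hden' hden).add hlog_sub).sub hlog_add).congr_deriv ?_
  field_simp
  ring

lemma strictAntiOn_psi : StrictAntiOn psi (Ioo 0 1) := by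
  refine strictAntiOn_of_deriv_neg (convex_Ioo 0 1)
    (fun x hx => (hasDerivAt_psi hx).continuousAt.continuousWithinAt) fun x hx => ?_
  rw [interior_Ioo] at hx
  rw [(hasDerivAt_psi hx).deriv, neg_lt_zero]
  have : 0 < 1 - x ^ 2 := by nlinarith [hx.1, hx.2]
  exact one_div_pos.2 (by positivity [hx.1.ne'])

lemma psi_one_half_pos : 0 < psi (1 / 2) := by
  have hlog3 : log 3 ≤ 2 := by linarith [log_le_sub_one_of_pos (by norm_num : (0 : ℝ) < 3)]
  have hlog_sub : log (1 - 1 / 2 : ℝ) = -log 2 := by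
    rw [show (1 - 1 / 2 : ℝ) = 2⁻¹ by norm_num, log_inv]
  have hlog_add : log (1 + 1 / 2 : ℝ) = log 3 - log 2 := by
    rw [show (1 + 1 / 2 : ℝ) = 3 / 2 by norm_num, log_div (by norm_num) (by norm_num)]
  simp only [psi, hlog_sub, hlog_add]
  norm_num
  linarith

lemma psi_nine_tenths_neg : psi (9 / 10) < 0 := by
  have hlog_sub : log (1 - 9 / 10 : ℝ) < 0 := log_neg (by norm_num) (by norm_num)
  have hlog_add : 0 < log (1 + 9 / 10 : ℝ) := log_pos (by norm_num)
  have hfrac : (2 - 3 * (9 / 10) ^ 2) / (2 * (9 / 10) * (1 - (9 / 10) ^ 2) : ℝ) < 0 := by norm_num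
  simp only [psi]
  linarith

lemma exists_psi_eq_zero : ∃ s ∈ Ioo (0 : ℝ) 1, psi s = 0 := by
  have hsub : Icc (1 / 2 : ℝ) (9 / 10) ⊆ Ioo 0 1 := fun x hx =>
    ⟨by linarith [hx.1], by linarith [hx.2]⟩
  have hcont : ContinuousOn psi (Icc (1 / 2 : ℝ) (9 / 10)) :=
    fun x hx => (hasDerivAt_psi (hsub hx)).continuousAt.continuousWithinAt
  obtain ⟨s, hs, hψ⟩ := intermediate_value_Icc' (by norm_num) hcont
    ⟨psi_nine_tenths_neg.le, psi_one_half_pos.le⟩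
  exact ⟨s, hsub hs, hψ⟩

/-- The chain-rule expression for `φ'(r)`, written in `u = √r` and `v = √(1 - r)`. -/
lemma phi_deriv_expr_eq {u v : ℝ} (hu : 0 < u) (hv : 0 < v) (huv : u ^ 2 + v ^ 2 = 1) :
    (1 - 2 * u ^ 2) / (2 * (u * v))
        + (-1 * (3 / 2) * v * log (1 + u) + v ^ 3 * (1 / (2 * u) / (1 + u)))
      - (1 / 2 * (-1 * (3 / 2) * v) * log ((1 - u) * (1 + u)) + 1 / 2 * v ^ 3 * (-1 / v ^ 2))
      = v * psi u := by
  have hu1 : u < 1 := by nlinarith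
  rw [log_mul (by linarith) (by linarith), psi, show 1 - u ^ 2 = v ^ 2 by linarith]
  field_simp
  linear_combination 8 * (1 + u + v ^ 2) * huv

lemma rpow_three_halves_eq_sqrt_pow {x : ℝ} (hx : 0 ≤ x) : x ^ (3 / 2 : ℝ) = √x ^ 3 := by
  rw [sqrt_eq_rpow, ← rpow_natCast, ← rpow_mul hx]
  norm_num

lemma hasDerivAt_phi {r : ℝ} (hr : r ∈ Ioo (0 : ℝ) 1) :
    HasDerivAt phi (√(1 - r) * psi √r) r := by
  obtain ⟨h0, h1⟩ := hr
  have h1r : 0 < 1 - r := by linarith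
  have hsqrt : HasDerivAt (fun x => √(x * (1 - x))) ((1 - 2 * r) / (2 * √(r * (1 - r)))) r :=
    (((hasDerivAt_id' r).mul ((hasDerivAt_id' r).const_sub 1)).congr_deriv (by ring)).sqrt
      (mul_pos h0 h1r).ne'
  have hpow : HasDerivAt (fun x : ℝ => (1 - x) ^ (3 / 2 : ℝ))
      (-1 * (3 / 2) * (1 - r) ^ (3 / 2 - 1 : ℝ)) r :=
    ((hasDerivAt_id' r).const_sub 1).rpow_const (Or.inr (by norm_num))
  have hlog_add : HasDerivAt (fun x => log (1 + √x)) (1 / (2 * √r) / (1 + √r)) r :=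
    ((hasDerivAt_sqrt h0.ne').const_add 1).log (by positivity)
  have hlog_sub : HasDerivAt (fun x => log (1 - x)) (-1 / (1 - r)) r :=
    ((hasDerivAt_id' r).const_sub 1).log h1r.ne'
  refine ((hsqrt.add (hpow.mul hlog_add)).sub
    ((hpow.const_mul (1 / 2)).mul hlog_sub)).congr_deriv ?_
  have hu := sqrt_pos.2 h0
  have hv := sqrt_pos.2 h1r
  rw [← phi_deriv_expr_eq hu hv (by rw [sq_sqrt h0.le, sq_sqrt h1r.le]; ring),
    rpow_three_halves_eq_sqrt_pow h1r.le, show (3 / 2 - 1 : ℝ) = 1 / 2 by norm_num, ← sqrt_eq_rpow,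
    sqrt_mul h0.le, show (1 - √r) * (1 + √r) = 1 - r by nlinarith [sq_sqrt h0.le], sq_sqrt h0.le,
    sq_sqrt h1r.le]

lemma deriv_phi_eq_zero_iff {r : ℝ} (hr : r ∈ Ioo (0 : ℝ) 1) : deriv phi r = 0 ↔ psi √r = 0 := by
  rw [(hasDerivAt_phi hr).deriv, mul_eq_zero, or_iff_right (sqrt_pos.2 (sub_pos.2 hr.2)).ne']

/-- There is a unique `r₀ ∈ (0,1)` with `φ′(r₀) = 0`. -/
theorem stmt_8 : ∃! r₀ : ℝ, r₀ ∈ Set.Ioo (0 : ℝ) 1 ∧ deriv phi r₀ = 0 := by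
  obtain ⟨s₀, hs₀, hψ⟩ := exists_psi_eq_zero
  have hsq : s₀ ^ 2 ∈ Ioo (0 : ℝ) 1 := ⟨by positivity [hs₀.1.ne'], by nlinarith [hs₀.1, hs₀.2]⟩
  refine ⟨s₀ ^ 2, ⟨hsq, ?_⟩, fun r ⟨hr, hd⟩ => ?_⟩
  · rwa [deriv_phi_eq_zero_iff hsq, sqrt_sq hs₀.1.le]
  have hsqrt : √r ∈ Ioo (0 : ℝ) 1 := ⟨sqrt_pos.2 hr.1, (sqrt_lt' one_pos).2 (by simpa using hr.2)⟩
  have : √r = s₀ := strictAntiOn_psi.injOn hsqrt hs₀ (by rw [(deriv_phi_eq_zero_iff hr).1 hd, hψ])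
  rw [← this, sq_sqrt hr.1.le]
end

section
/- Let W > 0 and λ > 0. Suppose u : ℝ → ℝ is continuous on [−1,1], twice differentiable on (−1,1) with u''(x) = λ/(2·(1+u(x)+W)²) for all x ∈ (−1,1), and satisfies u(−1) = u(1) = 0 and u(x) > −1 for all x ∈ (−1,1). Then u is even on [−1,1], i.e. u(−x) = u(x) for all x ∈ [−1,1]. -/
/-!
Since `u'' > 0`, `u` is strictly convex, hence negative on `(-1, 1)`, and by Rolle `u'` vanishes
at some `c`. The equation is autonomous and its right-hand side is Lipschitz on the range of `u`,
so uniqueness for the first-order system satisfied by `(u, u')` shows that `x ↦ u (2c - x)`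
agrees with `u` on the largest interval centred at `c` inside `[-1, 1]`. If `c ≠ 0`, one end of
that interval is `±1` and the other lies in `(-1, 1)`, where `u` does not vanish; so `c = 0`.
-/

open Set NNReal

theorem lipschitzOnWith_snd_prodMk_comp_fst {α β : Type*} [PseudoMetricSpace α]
    [PseudoMetricSpace β] {f : α → β} {K : ℝ≥0} {s : Set α} (hf : LipschitzOnWith K f s) :
    LipschitzOnWith (max 1 K) (fun p : α × β => (p.2, f p.1)) (Prod.fst ⁻¹' s) := by
  have hfst : LipschitzOnWith K (fun p : α × β => f p.1) (Prod.fst ⁻¹' s) := by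
    have h := hf.comp (LipschitzWith.prod_fst (β := β)).lipschitzOnWith fun _ hp => hp
    rwa [mul_one] at h
  exact LipschitzWith.prod_snd.lipschitzOnWith.prodMk hfst

section Reflection

variable {E : Type*} [NormedAddCommGroup E] [NormedSpace ℝ E] {f : E → E} {K : ℝ≥0} {S : Set E}
  {u u' : ℝ → E} {c r : ℝ}

/-- Both `(u, u')` and `(u (2c - ·), -u' (2c - ·))` solve `p' = (p.2, f p.1)`, and they agree at
the critical point `c`. -/
theorem eqOn_comp_reflect_of_hasDerivAt (hf : LipschitzOnWith K f S)
    (hu : ∀ x ∈ Ioo (c - r) (c + r), HasDerivAt u (u' x) x)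
    (hu' : ∀ x ∈ Ioo (c - r) (c + r), HasDerivAt u' (f (u x)) x)
    (hS : MapsTo u (Ioo (c - r) (c + r)) S) (hc : u' c = 0) (hr : 0 < r) :
    EqOn (fun x => u (2 * c - x)) u (Ioo (c - r) (c + r)) := by
  have hrefl : MapsTo (fun x => 2 * c - x) (Ioo (c - r) (c + r)) (Ioo (c - r) (c + r)) :=
    fun x hx => ⟨by linarith [hx.2], by linarith [hx.1]⟩
  have hv : ∀ t ∈ Ioo (c - r) (c + r),
      LipschitzOnWith (max 1 K) (fun p : E × E => (p.2, f p.1)) (Prod.fst ⁻¹' S) :=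
    fun _ _ => lipschitzOnWith_snd_prodMk_comp_fst hf
  have hsol := ODE_solution_unique_of_mem_Ioo hv
    (show c ∈ Ioo (c - r) (c + r) by constructor <;> linarith)
    (f := fun x => (u (2 * c - x), -u' (2 * c - x))) (g := fun x => (u x, u' x))
    (fun x hx => ⟨((hu _ (hrefl hx)).comp_const_sub _ x).prodMk (by
        have h := ((hu' _ (hrefl hx)).comp_const_sub _ x).neg
        rwa [neg_neg] at h), hS (hrefl hx)⟩)
    (fun x hx => ⟨(hu x hx).prodMk (hu' x hx), hS hx⟩)
    (by simp [two_mul, hc])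
  exact fun x hx => congrArg Prod.fst (hsol hx)

theorem eqOn_comp_reflect_Icc_of_hasDerivAt (hf : LipschitzOnWith K f S)
    (hcont : ContinuousOn u (Icc (c - r) (c + r)))
    (hu : ∀ x ∈ Ioo (c - r) (c + r), HasDerivAt u (u' x) x)
    (hu' : ∀ x ∈ Ioo (c - r) (c + r), HasDerivAt u' (f (u x)) x)
    (hS : MapsTo u (Ioo (c - r) (c + r)) S) (hc : u' c = 0) (hr : 0 < r) :
    EqOn (fun x => u (2 * c - x)) u (Icc (c - r) (c + r)) := by
  have hrefl : MapsTo (fun x => 2 * c - x) (Icc (c - r) (c + r)) (Icc (c - r) (c + r)) :=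
    fun x hx => ⟨by linarith [hx.2], by linarith [hx.1]⟩
  refine (eqOn_comp_reflect_of_hasDerivAt hf hu hu' hS hc hr).of_subset_closure
    (hcont.comp (by fun_prop) hrefl) hcont Ioo_subset_Icc_self ?_
  rw [closure_Ioo (by linarith)]

end Reflection

theorem strictConvexOn_Icc_of_hasDerivAt_of_pos {u u' u'' : ℝ → ℝ} {a b : ℝ}
    (hc : ContinuousOn u (Icc a b)) (hu : ∀ x ∈ Ioo a b, HasDerivAt u (u' x) x)
    (hu' : ∀ x ∈ Ioo a b, HasDerivAt u' (u'' x) x) (hpos : ∀ x ∈ Ioo a b, 0 < u'' x) :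
    StrictConvexOn ℝ (Icc a b) u := by
  have hmono : StrictMonoOn u' (Ioo a b) :=
    strictMonoOn_of_hasDerivWithinAt_pos (convex_Ioo a b) (HasDerivAt.continuousOn hu')
      (by simpa only [interior_Ioo] using fun x hx => (hu' x hx).hasDerivWithinAt)
      (by simpa only [interior_Ioo] using hpos)
  refine StrictMonoOn.strictConvexOn_of_deriv (convex_Icc a b) hc ?_
  rw [interior_Icc]
  exact hmono.congr fun x hx => ((hu x hx).deriv).symm

theorem exists_lipschitzOnWith_mems_nonlinearity (W lam : ℝ) {a b : ℝ} (ha : 0 < 1 + a + W) :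
    ∃ K, LipschitzOnWith K (fun y : ℝ => lam / (2 * (1 + y + W) ^ 2)) (Icc a b) := by
  refine ContDiffOn.exists_lipschitzOnWith ?_ one_ne_zero (convex_Icc a b) isCompact_Icc
  refine contDiffOn_const.div (by fun_prop) fun y hy => ?_
  have : 0 < 1 + y + W := by linarith [hy.1]
  positivity

theorem mems_eqOn_reflect_of_deriv_eq_zero {W lam : ℝ} (hW : 0 < W) {u u' : ℝ → ℝ}
    (hc : ContinuousOn u (Icc (-1) 1)) (hu : ∀ x ∈ Ioo (-1 : ℝ) 1, HasDerivAt u (u' x) x)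
    (hu'' : ∀ x ∈ Ioo (-1 : ℝ) 1, HasDerivAt u' (lam / (2 * (1 + u x + W) ^ 2)) x)
    (hrange : MapsTo u (Ioo (-1) 1) (Icc (-1) 0)) {c : ℝ} (hcI : c ∈ Ioo (-1 : ℝ) 1)
    (hc' : u' c = 0) :
    EqOn (fun x => u (2 * c - x)) u (Icc (c - (1 - |c|)) (c + (1 - |c|))) := by
  obtain ⟨K, hK⟩ := exists_lipschitzOnWith_mems_nonlinearity W lam (a := -1) (b := 0)
    (by linarith)
  have hr : 0 < 1 - |c| := by rw [sub_pos, abs_lt]; exact hcI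
  have hsub : Ioo (c - (1 - |c|)) (c + (1 - |c|)) ⊆ Ioo (-1) 1 :=
    Ioo_subset_Ioo (by linarith [neg_abs_le c]) (by linarith [le_abs_self c])
  refine eqOn_comp_reflect_Icc_of_hasDerivAt hK (hc.mono ?_) (fun x hx => hu x (hsub hx))
    (fun x hx => hu'' x (hsub hx)) (hrange.mono_left hsub) hc' hr
  exact Icc_subset_Icc (by linarith [neg_abs_le c]) (by linarith [le_abs_self c])

theorem eq_zero_of_eqOn_reflect {u : ℝ → ℝ} (hum1 : u (-1) = 0) (hu1 : u 1 = 0)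
    (hneg : ∀ x ∈ Ioo (-1 : ℝ) 1, u x < 0) {c : ℝ} (hcI : c ∈ Ioo (-1 : ℝ) 1)
    (hsymm : EqOn (fun x => u (2 * c - x)) u (Icc (c - (1 - |c|)) (c + (1 - |c|)))) :
    c = 0 := by
  set r := 1 - |c| with hr
  have hends : u (c - r) = u (c + r) := by
    have h : u (2 * c - (c + r)) = u (c + r) :=
      hsymm (right_mem_Icc.2 (by linarith [abs_lt.2 hcI]))
    rwa [show 2 * c - (c + r) = c - r by ring] at h
  rcases lt_trichotomy c 0 with hlt | heq | hgt
  · have hr' : r = 1 + c := by rw [hr, abs_of_neg hlt]; ring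
    rw [show c - r = -1 by linarith, hum1] at hends
    exact absurd hends (hneg (c + r) ⟨by linarith [hcI.1], by linarith⟩).ne'
  · exact heq
  · have hr' : r = 1 - c := by rw [hr, abs_of_pos hgt]
    rw [show c + r = 1 by linarith, hu1] at hends
    exact absurd hends (hneg (c - r) ⟨by linarith, by linarith [hcI.2]⟩).ne

/-- Any unzipped stationary state of the one-dimensional MEMS problem on `(−1,1)` is even. -/
theorem stmt_12 (W lam : ℝ) (hW : 0 < W) (hlam : 0 < lam)
    (u u' : ℝ → ℝ)
    (hc : ContinuousOn u (Set.Icc (-1 : ℝ) 1))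
    (hu : ∀ x ∈ Set.Ioo (-1 : ℝ) 1, HasDerivAt u (u' x) x)
    (hu'' : ∀ x ∈ Set.Ioo (-1 : ℝ) 1, HasDerivAt u' (lam / (2 * (1 + u x + W) ^ 2)) x)
    (hum1 : u (-1) = 0) (hu1 : u 1 = 0)
    (hgt : ∀ x ∈ Set.Ioo (-1 : ℝ) 1, u x > -1) :
    ∀ x ∈ Set.Icc (-1 : ℝ) 1, u (-x) = u x := by
  have hconv : StrictConvexOn ℝ (Icc (-1) 1) u :=
    strictConvexOn_Icc_of_hasDerivAt_of_pos hc hu hu'' fun x hx => by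
      have : 0 < 1 + u x + W := by linarith [hgt x hx]
      positivity
  have hneg : ∀ x ∈ Ioo (-1 : ℝ) 1, u x < 0 := fun x hx => by
    simpa [hum1, hu1] using hconv.lt_on_openSegment (left_mem_Icc.2 (by norm_num))
      (right_mem_Icc.2 (by norm_num)) (by norm_num) (by rwa [openSegment_eq_Ioo (by norm_num)])
  obtain ⟨c, hcI, hc'⟩ := exists_hasDerivAt_eq_zero (by norm_num) hc (hum1.trans hu1.symm) hu
  have hsymm := mems_eqOn_reflect_of_deriv_eq_zero hW hc hu hu''
    (fun x hx => ⟨(hgt x hx).le, (hneg x hx).le⟩) hcI hc'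
  obtain rfl := eq_zero_of_eqOn_reflect hum1 hu1 hneg hcI hsymm
  intro x hx
  simpa using hsymm (show x ∈ Icc (0 - (1 - |0|)) (0 + (1 - |0|)) by simpa using hx)
end

section
/- Let W > 0 and λ > 0. Suppose u : ℝ → ℝ is continuously differentiable on [−1,1] with u(−1) = u(1) = 0, and there exist b < a in the open interval (−1,1) such that u(x) = −1 for x ∈ [b,a], u(x) > −1 for x ∈ [−1,b) ∪ (a,1], and u is twice differentiable on (−1,b) ∪ (a,1) with u''(x) = λ/(2·(1+u(x)+W)²) there. Then λ > Λ_*(W), b = −a, a = 1 − √(Λ_*(W)/λ), and u(−x) = u(x) for all x ∈ [−1,1]. -/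
open Set Real

lemma eq_left_of_hasDerivAt_zero {f : ℝ → ℝ} {a b : ℝ} (hc : ContinuousOn f (Icc a b))
    (hd : ∀ x ∈ Ioo a b, HasDerivAt f 0 x) : ∀ x ∈ Icc a b, f x = f a := by
  intro x hx
  rcases hx.1.eq_or_lt with rfl | hax
  · rfl
  obtain ⟨c, -, hslope⟩ := exists_hasDerivAt_eq_slope f (fun _ => 0) hax
    (hc.mono (Icc_subset_Icc le_rfl hx.2)) fun y hy => hd y ⟨hy.1, hy.2.trans_le hx.2⟩
  rw [eq_comm, div_eq_zero_iff, sub_eq_zero] at hslope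
  exact hslope.resolve_right (sub_ne_zero.2 hax.ne')

lemma hasDerivWithinAt_eq_zero_of_eqOn_Icc {f : ℝ → ℝ} {f' c a b x : ℝ} {s : Set ℝ}
    (hab : a < b) (hs : Icc a b ⊆ s) (hx : x ∈ Icc a b) (hconst : ∀ y ∈ Icc a b, f y = c)
    (hf : HasDerivWithinAt f f' s x) : f' = 0 :=
  (uniqueDiffOn_Icc hab x hx).eq_deriv _ (hf.mono hs)
    ((hasDerivWithinAt_const x _ c).congr hconst (hconst x hx))

/-- The primitive of `v ↦ √(1+v+W)/√(1+v)` vanishing at `v = -1`. -/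
noncomputable def G (W v : ℝ) : ℝ :=
  √((1 + v) * (1 + v + W)) + W * log (√(1 + v) + √(1 + v + W)) - W * log √W

lemma G_neg_one (W : ℝ) : G W (-1) = 0 := by
  simp [G]

lemma continuousOn_G {W : ℝ} (hW : 0 < W) : ContinuousOn (G W) (Ici (-1)) := by
  intro v hv
  have hpos : 0 < √(1 + v) + √(1 + v + W) := by
    have := sqrt_pos.2 (show 0 < 1 + v + W by linarith [mem_Ici.1 hv])
    positivity
  unfold G
  exact (by fun_prop (disch := exact hpos.ne') : ContinuousAt _ v).continuousWithinAt

lemma hasDerivAt_G {W v : ℝ} (hW : 0 ≤ W) (hv : -1 < v) :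
    HasDerivAt (G W) (√(1 + v + W) / √(1 + v)) v := by
  have h0 : 0 < 1 + v := by linarith
  have h1 : 0 < 1 + v + W := by linarith
  set α := √(1 + v) with hα
  set β := √(1 + v + W) with hβ
  have hαpos : 0 < α := sqrt_pos.2 h0
  have hβpos : 0 < β := sqrt_pos.2 h1
  have hα2 : α ^ 2 = 1 + v := sq_sqrt h0.le
  have hβ2 : β ^ 2 = 1 + v + W := sq_sqrt h1.le
  have hlin : HasDerivAt (fun v : ℝ => 1 + v) 1 v := (hasDerivAt_id v).const_add 1
  have hlinW : HasDerivAt (fun v : ℝ => 1 + v + W) 1 v := hlin.add_const W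
  have hprod : HasDerivAt (fun v => √((1 + v) * (1 + v + W)))
      ((1 * (1 + v + W) + (1 + v) * 1) / (2 * (α * β))) v := by
    have := (hlin.mul hlinW).sqrt (mul_pos h0 h1).ne'
    simp only [Pi.mul_apply] at this
    rwa [sqrt_mul h0.le] at this
  have hlog : HasDerivAt (fun v => log (√(1 + v) + √(1 + v + W)))
      ((1 / (2 * α) + 1 / (2 * β)) / (α + β)) v :=
    ((hlin.sqrt h0.ne').add (hlinW.sqrt h1.ne')).log (add_pos hαpos hβpos).ne'
  refine ((hprod.add (hlog.const_mul W)).sub_const (W * log √W)).congr_deriv ?_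
  have hW' : W = β ^ 2 - α ^ 2 := by rw [hα2, hβ2]; ring
  rw [← hα2, hW']
  field_simp
  ring

lemma strictMonoOn_G {W : ℝ} (hW : 0 < W) : StrictMonoOn (G W) (Ici (-1)) := by
  refine strictMonoOn_of_deriv_pos (convex_Ici _) (continuousOn_G hW) fun v hv => ?_
  rw [interior_Ici] at hv
  have hv : -1 < v := hv
  rw [(hasDerivAt_G hW.le hv).deriv]
  exact div_pos (sqrt_pos.2 (by linarith)) (sqrt_pos.2 (by linarith))

lemma G_zero_pos {W : ℝ} (hW : 0 < W) : 0 < G W 0 := by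
  simpa [G_neg_one] using strictMonoOn_G hW (by norm_num : (-1 : ℝ) ∈ Ici (-1))
    (by norm_num : (0 : ℝ) ∈ Ici (-1)) (by norm_num)

lemma sqrt_mul_G_zero {W : ℝ} (hW : 0 < W) :
    √W * G W 0 = (1 + W) * √(1 + W) * phi (1 / (1 + W)) := by
  have h1 : 0 < 1 + W := by linarith
  have hs1 : 0 < √(1 + W) := sqrt_pos.2 h1
  have hr : 1 - 1 / (1 + W) = W / (1 + W) := by field_simp; ring
  have e1 : √(1 / (1 + W) * (1 - 1 / (1 + W))) = √W / (1 + W) := by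
    rw [hr, div_mul_div_comm, one_mul, ← sq, sqrt_div hW.le, sqrt_sq h1.le]
  have e2 : (1 - 1 / (1 + W)) ^ ((3 : ℝ) / 2) = W / (1 + W) * (√W / √(1 + W)) := by
    rw [hr, show (3 : ℝ) / 2 = 1 + 1 / 2 by norm_num, rpow_add (by positivity), rpow_one,
      ← sqrt_eq_rpow, sqrt_div hW.le]
  have e3 : log (1 + √(1 / (1 + W))) = log (1 + √(1 + W)) - log √(1 + W) := by
    rw [sqrt_div zero_le_one, sqrt_one, ← log_div (by positivity) hs1.ne']
    congr 1
    field_simp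
    ring
  have e4 : log (1 - 1 / (1 + W)) = 2 * log √W - 2 * log √(1 + W) := by
    rw [hr, log_div hW.ne' h1.ne', log_sqrt hW.le, log_sqrt h1.le]
    ring
  unfold G phi
  rw [e1, e2, e3, e4]
  norm_num
  field_simp
  ring

lemma LambdaStar_eq_sq {W : ℝ} (hW : 0 < W) : LambdaStar W = (√W * G W 0) ^ 2 := by
  rw [LambdaStar, sqrt_mul_G_zero hW, mul_pow, mul_pow, sq_sqrt (by linarith)]
  ring

/-- The part of a zipped state to the right of its coincidence set, which it leaves at `a`;
the part to the left of the coincidence set becomes one after the reflection `x ↦ -x`. -/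
structure IsDetachedBranch (W lam a : ℝ) (v v' : ℝ → ℝ) : Prop where
  hasDerivWithinAt : ∀ x ∈ Icc a 1, HasDerivWithinAt v (v' x) (Icc a 1) x
  continuousOn_deriv : ContinuousOn v' (Icc a 1)
  apply_left : v a = -1
  deriv_left : v' a = 0
  neg_one_lt : ∀ x ∈ Ioc a 1, -1 < v x
  hasDerivAt_deriv : ∀ x ∈ Ioo a 1, HasDerivAt v' (lam / (2 * (1 + v x + W) ^ 2)) x

namespace IsDetachedBranch

variable {W lam a : ℝ} {v v' : ℝ → ℝ}

lemma neg_one_le (h : IsDetachedBranch W lam a v v') : ∀ x ∈ Icc a 1, -1 ≤ v x := by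
  intro x hx
  rcases hx.1.eq_or_lt with rfl | hax
  · exact h.apply_left.ge
  · exact (h.neg_one_lt x ⟨hax, hx.2⟩).le

lemma continuousOn (h : IsDetachedBranch W lam a v v') : ContinuousOn v (Icc a 1) :=
  fun x hx => (h.hasDerivWithinAt x hx).continuousWithinAt

lemma hasDerivAt (h : IsDetachedBranch W lam a v v') : ∀ x ∈ Ioo a 1, HasDerivAt v (v' x) x :=
  fun x hx => (h.hasDerivWithinAt x (Ioo_subset_Icc_self hx)).hasDerivAt (Icc_mem_nhds hx.1 hx.2)

lemma deriv_pos (h : IsDetachedBranch W lam a v v') (hW : 0 < W) (hlam : 0 < lam) :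
    ∀ x ∈ Ioc a 1, 0 < v' x := by
  have hmono : StrictMonoOn v' (Icc a 1) := by
    refine strictMonoOn_of_deriv_pos (convex_Icc a 1) h.continuousOn_deriv fun x hx => ?_
    rw [interior_Icc] at hx
    have : 0 < 1 + v x + W := by linarith [h.neg_one_lt x ⟨hx.1, hx.2.le⟩]
    rw [(h.hasDerivAt_deriv x hx).deriv]
    positivity
  intro x hx
  simpa [h.deriv_left] using
    hmono (left_mem_Icc.2 (hx.1.trans_le hx.2).le) (Ioc_subset_Icc_self hx) hx.1

/-- Conservation of the energy `v'² + λ/(1+v+W)`, evaluated at the touchdown point `a`. -/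
lemma deriv_sq (h : IsDetachedBranch W lam a v v') (hW : 0 < W) :
    ∀ x ∈ Icc a 1, v' x ^ 2 = lam * (1 + v x) / (W * (1 + v x + W)) := by
  have hpos : ∀ x ∈ Icc a 1, 0 < 1 + v x + W := fun x hx => by linarith [h.neg_one_le x hx]
  have henergy : ContinuousOn (fun x => v' x ^ 2 + lam / (1 + v x + W)) (Icc a 1) :=
    (h.continuousOn_deriv.pow 2).add <| continuousOn_const.div
      ((continuousOn_const.add h.continuousOn).add continuousOn_const) fun x hx => (hpos x hx).ne'
  have hconst := eq_left_of_hasDerivAt_zero henergy fun x hx => by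
    have hx' := hpos x (Ioo_subset_Icc_self hx)
    have := ((h.hasDerivAt_deriv x hx).pow 2).add
      ((hasDerivAt_const x lam).div (((h.hasDerivAt x hx).const_add 1).add_const W) hx'.ne')
    refine this.congr_deriv ?_
    field_simp
    ring
  intro x hx
  have hx' := hpos x hx
  have := hconst x hx
  simp only [h.apply_left, h.deriv_left] at this
  field_simp at this ⊢
  linarith

lemma sqrt_mul_G_eq (h : IsDetachedBranch W lam a v v') (hW : 0 < W) (hlam : 0 < lam) :
    ∀ x ∈ Icc a 1, √W * G W (v x) = √lam * (x - a) := by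
  have hcont : ContinuousOn (fun x => √W * G W (v x) - √lam * (x - a)) (Icc a 1) :=
    (continuousOn_const.mul ((continuousOn_G hW).comp h.continuousOn h.neg_one_le)).sub
      (continuousOn_const.mul (continuousOn_id.sub continuousOn_const))
  have hconst := eq_left_of_hasDerivAt_zero hcont fun x hx => by
    have hv : -1 < v x := h.neg_one_lt x (Ioo_subset_Ioc_self hx)
    have hslope : √W * (√(1 + v x + W) / √(1 + v x) * v' x) = √lam := by
      have h0 : 0 < 1 + v x := by linarith
      have h1 : 0 < 1 + v x + W := by linarith
      refine ((sqrt_eq_iff_eq_sq hlam.le ?_).2 ?_).symm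
      · have := h.deriv_pos hW hlam x (Ioo_subset_Ioc_self hx)
        positivity
      · rw [mul_pow, div_mul_eq_mul_div, div_pow, mul_pow, sq_sqrt hW.le, sq_sqrt h0.le,
          sq_sqrt h1.le, h.deriv_sq hW x (Ioo_subset_Icc_self hx)]
        field_simp
    have := (((hasDerivAt_G hW.le hv).comp x (h.hasDerivAt x hx)).const_mul √W).sub
      (((hasDerivAt_id x).sub_const a).const_mul √lam)
    refine this.congr_deriv ?_
    rw [hslope]
    ring
  intro x hx
  have := hconst x hx
  rw [h.apply_left, G_neg_one] at this
  linarith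

end IsDetachedBranch

structure IsZippedState (W lam b a : ℝ) (u u' : ℝ → ℝ) : Prop where
  neg_one_lt_left : -1 < b
  left_lt_right : b < a
  right_lt_one : a < 1
  hasDerivWithinAt : ∀ x ∈ Icc (-1) 1, HasDerivWithinAt u (u' x) (Icc (-1) 1) x
  continuousOn_deriv : ContinuousOn u' (Icc (-1) 1)
  apply_neg_one : u (-1) = 0
  apply_one : u 1 = 0
  coincidence : ∀ x ∈ Icc b a, u x = -1
  neg_one_lt : ∀ x ∈ Ico (-1) b ∪ Ioc a 1, -1 < u x
  hasDerivAt_deriv :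
    ∀ x ∈ Ioo (-1) b ∪ Ioo a 1, HasDerivAt u' (lam / (2 * (1 + u x + W) ^ 2)) x

namespace IsZippedState

variable {W lam a b : ℝ} {u u' : ℝ → ℝ}

lemma reflect (h : IsZippedState W lam b a u u') :
    IsZippedState W lam (-a) (-b) (fun x => u (-x)) (fun x => -u' (-x)) := by
  have hb := h.neg_one_lt_left
  have hba := h.left_lt_right
  have ha := h.right_lt_one
  have hmaps : MapsTo Neg.neg (Icc (-1 : ℝ) 1) (Icc (-1) 1) := fun x hx =>
    ⟨by linarith [hx.2], by linarith [hx.1]⟩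
  refine ⟨by linarith, by linarith, by linarith, fun x hx => ?_,
    (h.continuousOn_deriv.comp continuousOn_neg hmaps).neg, by simpa using h.apply_one,
    by simpa using h.apply_neg_one, fun x hx => h.coincidence (-x) ?_,
    fun x hx => h.neg_one_lt (-x) ?_, fun x hx => ?_⟩
  · exact ((h.hasDerivWithinAt (-x) (hmaps hx)).comp x (hasDerivAt_neg x).hasDerivWithinAt
      hmaps).congr_deriv (mul_neg_one _)
  · exact ⟨by linarith [hx.2], by linarith [hx.1]⟩
  · rcases hx with hx | hx
    · exact Or.inr ⟨by linarith [hx.2], by linarith [hx.1]⟩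
    · exact Or.inl ⟨by linarith [hx.2], by linarith [hx.1]⟩
  · have hx' : -x ∈ Ioo (-1) b ∪ Ioo a 1 := by
      rcases hx with hx | hx
      · exact Or.inr ⟨by linarith [hx.2], by linarith [hx.1]⟩
      · exact Or.inl ⟨by linarith [hx.2], by linarith [hx.1]⟩
    exact ((h.hasDerivAt_deriv (-x) hx').comp x (hasDerivAt_neg x)).neg.congr_deriv (by ring)

lemma isDetachedBranch (h : IsZippedState W lam b a u u') : IsDetachedBranch W lam a u u' := by
  have hb := h.neg_one_lt_left
  have hba := h.left_lt_right
  have ha := h.right_lt_one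
  have hsub : Icc a 1 ⊆ Icc (-1) 1 := Icc_subset_Icc (by linarith) le_rfl
  refine ⟨fun x hx => (h.hasDerivWithinAt x (hsub hx)).mono hsub, h.continuousOn_deriv.mono hsub,
    h.coincidence a ⟨hba.le, le_rfl⟩, ?_, fun x hx => h.neg_one_lt x (Or.inr hx),
    fun x hx => h.hasDerivAt_deriv x (Or.inr hx)⟩
  exact hasDerivWithinAt_eq_zero_of_eqOn_Icc hba (Icc_subset_Icc hb.le ha.le)
    ⟨hba.le, le_rfl⟩ h.coincidence (h.hasDerivWithinAt a ⟨by linarith, ha.le⟩)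

lemma apply_neg (h : IsZippedState W lam b a u u') (hW : 0 < W) (hlam : 0 < lam) (hab : b = -a) :
    ∀ x ∈ Icc (-1) 1, u (-x) = u x := by
  have hbranch : ∀ x ∈ Icc a 1, u (-x) = u x := by
    intro x hx
    have hx' : x ∈ Icc (-b) 1 := by rwa [hab, neg_neg]
    have hG : √W * G W (u (-x)) = √W * G W (u x) := by
      rw [h.reflect.isDetachedBranch.sqrt_mul_G_eq hW hlam x hx',
        h.isDetachedBranch.sqrt_mul_G_eq hW hlam x hx, hab, neg_neg]
    exact (strictMonoOn_G hW).injOn (h.reflect.isDetachedBranch.neg_one_le x hx')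
      (h.isDetachedBranch.neg_one_le x hx) (mul_left_cancel₀ (sqrt_pos.2 hW).ne' hG)
  intro x hx
  rcases lt_or_ge a x with hax | hxa
  · exact hbranch x ⟨hax.le, hx.2⟩
  rcases lt_or_ge x (-a) with hxa' | hxa'
  · simpa using (hbranch (-x) ⟨by linarith, by linarith [hx.1]⟩).symm
  · rw [h.coincidence x ⟨by linarith, hxa⟩, h.coincidence (-x) ⟨by linarith, by linarith⟩]

end IsZippedState

/-- Any zipped stationary state of the one-dimensional MEMS problem on `(−1,1)` with
coincidence set `[b,a]` satisfies `λ > Λ_*(W)`, `b = −a`, `a = 1 − √(Λ_*(W)/λ)`, and is even. -/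
theorem stmt_13 (W lam a b : ℝ) (hW : 0 < W) (hlam : 0 < lam)
    (hb : b ∈ Set.Ioo (-1 : ℝ) 1) (ha : a ∈ Set.Ioo (-1 : ℝ) 1) (hba : b < a)
    (u u' : ℝ → ℝ)
    (hu : ∀ x ∈ Set.Icc (-1 : ℝ) 1, HasDerivWithinAt u (u' x) (Set.Icc (-1 : ℝ) 1) x)
    (hu'c : ContinuousOn u' (Set.Icc (-1 : ℝ) 1))
    (hum1 : u (-1) = 0) (hu1 : u 1 = 0)
    (hcoin : ∀ x ∈ Set.Icc b a, u x = -1)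
    (hgt : ∀ x ∈ Set.Ico (-1 : ℝ) b ∪ Set.Ioc a 1, u x > -1)
    (hu'' : ∀ x ∈ Set.Ioo (-1 : ℝ) b ∪ Set.Ioo a 1,
      HasDerivAt u' (lam / (2 * (1 + u x + W) ^ 2)) x) :
    lam > LambdaStar W ∧ b = -a ∧ a = 1 - Real.sqrt (LambdaStar W / lam) ∧
      ∀ x ∈ Set.Icc (-1 : ℝ) 1, u (-x) = u x := by
  have h : IsZippedState W lam b a u u' :=
    ⟨hb.1, hba, ha.2, hu, hu'c, hum1, hu1, hcoin, hgt, hu''⟩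
  have hsl : 0 < √lam := sqrt_pos.2 hlam
  have hc : 0 < √W * G W 0 := mul_pos (sqrt_pos.2 hW) (G_zero_pos hW)
  have hcR : √W * G W 0 = √lam * (1 - a) := by
    simpa [hu1] using h.isDetachedBranch.sqrt_mul_G_eq hW hlam 1 ⟨ha.2.le, le_rfl⟩
  have hcL : √W * G W 0 = √lam * (1 + b) := by
    simpa [hum1, sub_eq_add_neg, add_comm] using
      h.reflect.isDetachedBranch.sqrt_mul_G_eq hW hlam 1 ⟨by linarith [hb.1], le_rfl⟩
  have hab : b = -a := by
    have := mul_left_cancel₀ hsl.ne' (hcR.symm.trans hcL)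
    linarith
  refine ⟨?_, hab, ?_, h.apply_neg hW hlam hab⟩
  · rw [LambdaStar_eq_sq hW, gt_iff_lt, ← lt_sqrt hc.le, hcR]
    nlinarith
  · rw [LambdaStar_eq_sq hW, sqrt_div' _ hlam.le, sqrt_sq hc.le, hcR]
    field_simp
    ring
end

section
/- Let W > 0 and λ > 0. Suppose u : ℝ → ℝ is continuously differentiable on [−1,1] with u(−1) = u(1) = 0, u(x) ≥ −1 for all x ∈ [−1,1], u is twice differentiable at every x ∈ (−1,1) with u(x) > −1 and satisfies u''(x) = λ/(2·(1+u(x)+W)²) at such points, and the set {x ∈ [−1,1] : u(x) = −1} has positive Lebesgue measure. Then there exist −1 < b < a < 1 such that {x ∈ [−1,1] : u(x) = −1} = [b,a], u'(b) = u'(a) = 0, and u(x) > −1 for x ∈ [−1,b) ∪ (a,1]. -/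
/-!
The coincidence set `Z` is compact and avoids the endpoints, where `u = 0`. At each point of `Z`
the function `u` attains its minimum `-1` in the interior of `[-1, 1]`, so `u' = 0` there.
Between two points of `Z` that enclose a gap of `Z`, the equation makes `u'' > 0`, so `u'` is
strictly increasing across the gap, contradicting `u' = 0` at both ends. Hence `Z` is an interval,
and it is not a single point because it has positive measure.
-/

open MeasureTheory Set Topology

lemma IsClosed.exists_disjoint_Ioo_of_notMem {Z : Set ℝ} (hZ : IsClosed Z) {c d x : ℝ}
    (hc : c ∈ Z) (hd : d ∈ Z) (hx : x ∈ Icc c d) (hxZ : x ∉ Z) :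
    ∃ c' ∈ Z, ∃ d' ∈ Z, x ∈ Ioo c' d' ∧ Disjoint (Ioo c' d') Z := by
  have hL : IsCompact (Z ∩ Icc c x) := isCompact_Icc.inter_left hZ
  have hR : IsCompact (Z ∩ Icc x d) := isCompact_Icc.inter_left hZ
  have hc' := hL.sSup_mem ⟨c, hc, left_mem_Icc.2 hx.1⟩
  have hd' := hR.sInf_mem ⟨d, hd, right_mem_Icc.2 hx.2⟩
  refine ⟨_, hc'.1, _, hd'.1, ⟨hc'.2.2.lt_of_ne ?_, hd'.2.1.lt_of_ne' ?_⟩, ?_⟩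
  · exact fun h => hxZ (h ▸ hc'.1)
  · exact fun h => hxZ (h ▸ hd'.1)
  · refine disjoint_left.2 fun y ⟨hy₁, hy₂⟩ hyZ => ?_
    rcases le_total y x with h | h
    · exact hy₁.not_ge (le_csSup hL.bddAbove ⟨hyZ, hc'.2.1.trans hy₁.le, h⟩)
    · exact hy₂.not_ge (csInf_le hR.bddBelow ⟨hyZ, h, hy₂.le.trans hd'.2.2⟩)

def coincidenceSet (u : ℝ → ℝ) : Set ℝ := {x | x ∈ Icc (-1 : ℝ) 1 ∧ u x = -1}

section coincidenceSet

variable {u u' : ℝ → ℝ}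

lemma isClosed_coincidenceSet (hc : ContinuousOn u (Icc (-1) 1)) :
    IsClosed (coincidenceSet u) :=
  hc.preimage_isClosed_of_isClosed isClosed_Icc isClosed_singleton

lemma coincidenceSet_subset_Ioo (hum1 : u (-1) = 0) (hu1 : u 1 = 0) :
    coincidenceSet u ⊆ Ioo (-1) 1 := by
  rintro x ⟨⟨hx₁, hx₂⟩, hux⟩
  refine ⟨hx₁.lt_of_ne ?_, hx₂.lt_of_ne ?_⟩ <;> rintro rfl <;> norm_num [hum1, hu1] at hux

lemma neg_one_lt_of_notMem_coincidenceSet (hge : ∀ x ∈ Icc (-1 : ℝ) 1, u x ≥ -1) {x : ℝ}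
    (hx : x ∈ Icc (-1) 1) (hxZ : x ∉ coincidenceSet u) : -1 < u x :=
  (hge x hx).lt_of_ne fun h => hxZ ⟨hx, h.symm⟩

lemma deriv_eq_zero_of_mem_coincidenceSet
    (hu : ∀ x ∈ Icc (-1 : ℝ) 1, HasDerivWithinAt u (u' x) (Icc (-1) 1) x)
    (hge : ∀ x ∈ Icc (-1 : ℝ) 1, u x ≥ -1) {z : ℝ} (hz : z ∈ Ioo (-1) 1)
    (hzZ : z ∈ coincidenceSet u) : u' z = 0 := by
  have hS : Icc (-1 : ℝ) 1 ∈ 𝓝 z := Icc_mem_nhds hz.1 hz.2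
  have hmin : IsMinOn u (Icc (-1) 1) z := fun y hy => hzZ.2 ▸ hge y hy
  exact (hmin.isLocalMin hS).hasDerivAt_eq_zero ((hu z hzZ.1).hasDerivAt hS)

lemma ordConnected_coincidenceSet {W lam : ℝ} (hW : 0 < W) (hlam : 0 < lam)
    (hu : ∀ x ∈ Icc (-1 : ℝ) 1, HasDerivWithinAt u (u' x) (Icc (-1) 1) x)
    (hu'c : ContinuousOn u' (Icc (-1) 1)) (hum1 : u (-1) = 0) (hu1 : u 1 = 0)
    (hge : ∀ x ∈ Icc (-1 : ℝ) 1, u x ≥ -1)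
    (hu'' : ∀ x ∈ Ioo (-1 : ℝ) 1, u x > -1 → HasDerivAt u' (lam / (2 * (1 + u x + W) ^ 2)) x) :
    (coincidenceSet u).OrdConnected := by
  have hZsub := coincidenceSet_subset_Ioo hum1 hu1
  have hzero z (hz : z ∈ coincidenceSet u) : u' z = 0 :=
    deriv_eq_zero_of_mem_coincidenceSet hu hge (hZsub hz) hz
  refine ⟨fun c hc d hd x hx => by_contra fun hxZ => ?_⟩
  obtain ⟨c', hc', d', hd', hx', hgap⟩ :=
    (isClosed_coincidenceSet fun x hx => (hu x hx).continuousWithinAt).exists_disjoint_Ioo_of_notMem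
      hc hd hx hxZ
  have hcd : c' < d' := hx'.1.trans hx'.2
  have hsub : Icc c' d' ⊆ Icc (-1) 1 := Icc_subset_Icc (hZsub hc').1.le (hZsub hd').2.le
  have hmono : StrictMonoOn u' (Icc c' d') := by
    refine strictMonoOn_of_deriv_pos (convex_Icc _ _) (hu'c.mono hsub) fun y hy => ?_
    rw [interior_Icc] at hy
    have hyI : y ∈ Ioo (-1) 1 := ⟨(hZsub hc').1.trans hy.1, hy.2.trans (hZsub hd').2⟩
    have huy := neg_one_lt_of_notMem_coincidenceSet hge (Ioo_subset_Icc_self hyI)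
      (hgap.notMem_of_mem_left hy)
    rw [(hu'' y hyI huy).deriv]
    have : 0 < 1 + u y + W := by linarith
    positivity
  exact (hmono (left_mem_Icc.2 hcd.le) (right_mem_Icc.2 hcd.le) hcd).ne
    (by rw [hzero c' hc', hzero d' hd'])

end coincidenceSet

/-- Structure of the coincidence set of a zipped state: it is a closed interval `[b,a]`
with `−1 < b < a < 1`, `u′(b) = u′(a) = 0`, and `u > −1` off `[b,a]`. -/
theorem stmt_14 (W lam : ℝ) (hW : 0 < W) (hlam : 0 < lam)
    (u u' : ℝ → ℝ)
    (hu : ∀ x ∈ Set.Icc (-1 : ℝ) 1, HasDerivWithinAt u (u' x) (Set.Icc (-1 : ℝ) 1) x)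
    (hu'c : ContinuousOn u' (Set.Icc (-1 : ℝ) 1))
    (hum1 : u (-1) = 0) (hu1 : u 1 = 0)
    (hge : ∀ x ∈ Set.Icc (-1 : ℝ) 1, u x ≥ -1)
    (hu'' : ∀ x ∈ Set.Ioo (-1 : ℝ) 1, u x > -1 →
      HasDerivAt u' (lam / (2 * (1 + u x + W) ^ 2)) x)
    (hzip : 0 < volume {x | x ∈ Set.Icc (-1 : ℝ) 1 ∧ u x = -1}) :
    ∃ b a : ℝ, -1 < b ∧ b < a ∧ a < 1 ∧
      {x | x ∈ Set.Icc (-1 : ℝ) 1 ∧ u x = -1} = Set.Icc b a ∧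
      u' b = 0 ∧ u' a = 0 ∧
      ∀ x ∈ Set.Ico (-1 : ℝ) b ∪ Set.Ioc a 1, u x > -1 := by
  change 0 < volume (coincidenceSet u) at hzip
  change ∃ b a : ℝ, _ ∧ _ ∧ _ ∧ coincidenceSet u = _ ∧ _
  set Z := coincidenceSet u
  have hZc : IsCompact Z := isCompact_Icc.of_isClosed_subset
    (isClosed_coincidenceSet fun x hx => (hu x hx).continuousWithinAt) fun x hx => hx.1
  have hZne : Z.Nonempty := nonempty_of_measure_ne_zero hzip.ne'
  have hZsub : Z ⊆ Ioo (-1) 1 := coincidenceSet_subset_Ioo hum1 hu1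
  have hZeq : Z = Icc (sInf Z) (sSup Z) := eq_Icc_of_connected_compact
    ⟨hZne, (ordConnected_coincidenceSet hW hlam hu hu'c hum1 hu1 hge hu'').isPreconnected⟩ hZc
  set b := sInf Z
  set a := sSup Z
  have hbZ : b ∈ Z := hZc.sInf_mem hZne
  have haZ : a ∈ Z := hZc.sSup_mem hZne
  have hba : b < a := by
    by_contra h
    rw [hZeq, Real.volume_Icc, ENNReal.ofReal_eq_zero.2 (by linarith)] at hzip
    exact lt_irrefl 0 hzip
  refine ⟨b, a, (hZsub hbZ).1, hba, (hZsub haZ).2, hZeq,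
    deriv_eq_zero_of_mem_coincidenceSet hu hge (hZsub hbZ) hbZ,
    deriv_eq_zero_of_mem_coincidenceSet hu hge (hZsub haZ) haZ, fun x hx => ?_⟩
  have hxS : x ∈ Icc (-1) 1 := by
    rcases hx with h | h
    exacts [⟨h.1, (h.2.trans (hZsub hbZ).2).le⟩, ⟨((hZsub haZ).1.trans h.1).le, h.2⟩]
  refine neg_one_lt_of_notMem_coincidenceSet hge hxS fun hxZ => ?_
  replace hxZ : x ∈ Icc b a := hZeq ▸ hxZ
  rcases hx with h | h
  exacts [h.2.not_ge hxZ.1, h.1.not_ge hxZ.2]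
end

section
/- Let r₀ ∈ (0,1) be the unique zero in (0,1) of the derivative of φ. Let W > 0 satisfy 1/(1+W) ≤ r₀ and let 0 < λ < Λ_*(W). Then there exists exactly one m ∈ (0,1) such that λ = (1+W)³·φ(m/(1+W))². -/
lemma phi_zero : phi 0 = 0 := by
  simp [phi]

lemma phi_pos {r : ℝ} (h0 : 0 < r) (h1 : r < 1) : 0 < phi r := by
  have h1r : (0:ℝ) < 1 - r := by linarith
  have hs : 0 < Real.sqrt (r * (1 - r)) := Real.sqrt_pos.2 (by positivity)
  have hp : (0:ℝ) < (1 - r) ^ ((3:ℝ)/2) := Real.rpow_pos_of_pos h1r _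
  have hl1 : 0 < Real.log (1 + Real.sqrt r) :=
    Real.log_pos (by have := Real.sqrt_pos.2 h0; linarith)
  have hl2 : Real.log (1 - r) < 0 := Real.log_neg h1r (by linarith)
  have h2 : 0 < (1 - r) ^ ((3:ℝ)/2) * Real.log (1 + Real.sqrt r) := by positivity
  have h3 : (1/2) * (1 - r) ^ ((3:ℝ)/2) * Real.log (1 - r) < 0 := by
    have : (0:ℝ) < (1/2) * (1 - r) ^ ((3:ℝ)/2) := by positivity
    exact mul_neg_of_pos_of_neg this hl2
  unfold phi; linarith

lemma phi_contOn : ContinuousOn phi (Set.Iio (1:ℝ)) := by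
  have hsq : Continuous fun r : ℝ => Real.sqrt (r * (1 - r)) :=
    Real.continuous_sqrt.comp (by continuity)
  have hpow : Continuous fun r : ℝ => (1 - r) ^ ((3:ℝ)/2) := by
    apply Continuous.rpow_const (by continuity)
    intro x; right; norm_num
  have hlog1 : Continuous fun r : ℝ => Real.log (1 + Real.sqrt r) := by
    apply Continuous.log (by continuity)
    intro x
    have := Real.sqrt_nonneg x
    intro h; linarith [h ▸ this]
  have hlog2 : ContinuousOn (fun r : ℝ => Real.log (1 - r)) (Set.Iio (1:ℝ)) := by
    apply ContinuousOn.log (by fun_prop)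
    intro x hx
    have : x < 1 := hx
    intro h
    have := sub_eq_zero.mp h
    linarith
  unfold phi
  exact (hsq.continuousOn.add (hpow.continuousOn.mul hlog1.continuousOn)).sub
    ((continuousOn_const.mul hpow.continuousOn).mul hlog2)

/-- Case (I): for `1/(1+W) ≤ r₀` and `0 < λ < Λ_*(W)`, there is exactly one `m ∈ (0,1)`
with `λ = (1+W)³·φ(m/(1+W))²`. -/
theorem stmt_15 (r₀ W lam : ℝ)
    (hr₀ : r₀ ∈ Set.Ioo (0 : ℝ) 1) (hzero : deriv phi r₀ = 0)
    (huniq : ∀ r ∈ Set.Ioo (0 : ℝ) 1, deriv phi r = 0 → r = r₀)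
    (hW : 0 < W) (hWr : 1 / (1 + W) ≤ r₀)
    (hlam0 : 0 < lam) (hlam1 : lam < LambdaStar W) :
    ∃! m : ℝ, m ∈ Set.Ioo (0 : ℝ) 1 ∧ lam = (1 + W) ^ 3 * (phi (m / (1 + W))) ^ 2 := by
  obtain ⟨hr₀0, hr₀1⟩ := hr₀
  -- φ is injective on [0, r₀]
  have hsub : Set.Icc (0:ℝ) r₀ ⊆ Set.Iio 1 := fun x hx => lt_of_le_of_lt hx.2 hr₀1
  have hcont : ContinuousOn phi (Set.Icc (0:ℝ) r₀) := phi_contOn.mono hsub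
  have key : ∀ a b : ℝ, a ∈ Set.Icc (0:ℝ) r₀ → b ∈ Set.Icc (0:ℝ) r₀ → a < b →
      phi a ≠ phi b := by
    intro a b ha hb hlt hab
    have hb1 : b < 1 := lt_of_le_of_lt hb.2 hr₀1
    rcases eq_or_lt_of_le ha.1 with h0 | h0
    · have hbpos : 0 < phi b := phi_pos (h0 ▸ hlt) hb1
      rw [← hab, ← h0, phi_zero] at hbpos
      exact lt_irrefl _ hbpos
    · obtain ⟨c, hc, hc0⟩ := exists_deriv_eq_zero hlt
        (hcont.mono (Set.Icc_subset_Icc ha.1 hb.2)) hab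
      have hcr : c = r₀ := huniq c ⟨lt_trans h0 hc.1, lt_trans hc.2 hb1⟩ hc0
      have : c < r₀ := lt_of_lt_of_le hc.2 hb.2
      rw [hcr] at this
      exact lt_irrefl _ this
  have hinj : Set.InjOn phi (Set.Icc (0:ℝ) r₀) := by
    intro a ha b hb hab
    rcases lt_trichotomy a b with h | h | h
    · exact absurd hab (key a b ha hb h)
    · exact h
    · exact absurd hab.symm (key b a hb ha h)
  have hmono : StrictMonoOn phi (Set.Icc (0:ℝ) r₀) := by
    apply ContinuousOn.strictMonoOn_of_injOn_Icc hr₀0.le ?_ hcont hinj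
    rw [phi_zero]
    exact (phi_pos hr₀0 hr₀1).le
  -- set up g
  set c := 1 / (1 + W) with hcdef
  have hW1 : (0:ℝ) < 1 + W := by linarith
  have hc0 : 0 < c := by positivity
  have hc1 : c < 1 := by
    rw [hcdef, div_lt_one hW1]; linarith
  set g : ℝ → ℝ := fun m => (1 + W) ^ 3 * (phi (m / (1 + W))) ^ 2 with hg
  have hkey : ∀ m : ℝ, m / (1 + W) = m * c := fun m => by
    rw [hcdef]; ring
  have hmem : ∀ m ∈ Set.Icc (0:ℝ) 1, m * c ∈ Set.Icc (0:ℝ) r₀ := by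
    intro m hm
    constructor
    · exact mul_nonneg hm.1 hc0.le
    · calc m * c ≤ 1 * c := by nlinarith [hm.2, hc0]
        _ ≤ r₀ := by rw [one_mul]; exact hWr
  have hgmono : StrictMonoOn g (Set.Icc (0:ℝ) 1) := by
    intro a ha b hb hab
    simp only [hg, hkey]
    have h1 : phi (a * c) < phi (b * c) :=
      hmono (hmem a ha) (hmem b hb) (by nlinarith [ha.1])
    have h2 : 0 ≤ phi (a * c) := by
      rcases eq_or_lt_of_le ha.1 with h | h
      · rw [← h, zero_mul, phi_zero]
      · exact (phi_pos (mul_pos h hc0) (lt_of_le_of_lt (hmem a ha).2 hr₀1)).le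
    have hsq : phi (a * c) ^ 2 < phi (b * c) ^ 2 := by nlinarith
    have hpw : (0:ℝ) < (1 + W) ^ 3 := by positivity
    nlinarith
  have hgcont : ContinuousOn g (Set.Icc (0:ℝ) 1) := by
    apply ContinuousOn.mul continuousOn_const
    apply ContinuousOn.pow
    apply phi_contOn.comp (by fun_prop)
    intro m hm
    simp only [Set.mem_Iio, hkey]
    exact lt_of_le_of_lt (hmem m hm).2 hr₀1
  have hg0 : g 0 = 0 := by simp [hg, phi_zero]
  have hg1 : g 1 = LambdaStar W := by simp [hg, LambdaStar]
  have hlam : lam ∈ Set.Ioo (g 0) (g 1) := by rw [hg0, hg1]; exact ⟨hlam0, hlam1⟩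
  obtain ⟨m, hm, hgm⟩ := intermediate_value_Ioo zero_le_one hgcont hlam
  refine ⟨m, ⟨hm, hgm.symm⟩, ?_⟩
  rintro y ⟨hy, hgy⟩
  exact hgmono.injOn (Set.Ioo_subset_Icc_self hy) (Set.Ioo_subset_Icc_self hm)
    (hgy.symm.trans hgm.symm)
end

section
/- Let M ≥ 0 and ε ∈ (0,1), and set r_ε := −(1+M)(1−ε). Define Ψ_ε(r) := −1−M + (((1+r+M)³ − ε³·(1+M)³)/(1−ε³))^{1/3} for r > r_ε. Then Ψ_ε is strictly increasing and strictly concave on the interval (r_ε, ∞). -/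
/-!
Write `x = 1 + r + M` and `b = ε (1 + M)`, so that `Ψ_ε` is, up to translations, the profile
`x ↦ ((x³ − b³)/c)^{1/3}` on `x > b`, with `c = 1 − ε³ > 0`. It increases because `x ↦ x³` and the
real cube root do. With `u = (x³ − b³)/c` its derivative is `x² u^{-2/3} / c`, and differentiating
once more, the `x³/c` part of `u` cancels, leaving `−2 x b³ u^{-5/3} / c²`, which is negative
since `x, b > 0`.
-/

open Set

noncomputable def cbrtDiffCubes (b c x : ℝ) : ℝ := ((x ^ 3 - b ^ 3) / c) ^ ((1 : ℝ) / 3)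

section CbrtDiffCubes

variable {b c x : ℝ}

lemma div_cube_sub_cube_pos (hc : 0 < c) (hx : b < x) : 0 < (x ^ 3 - b ^ 3) / c :=
  div_pos (sub_pos.2 (Odd.strictMono_pow (by decide) hx)) hc

lemma strictMonoOn_cbrtDiffCubes (hc : 0 < c) : StrictMonoOn (cbrtDiffCubes b c) (Ioi b) :=
  fun _ hx _ _ hxy => Real.rpow_lt_rpow (div_cube_sub_cube_pos hc hx).le
    (div_lt_div_of_pos_right (sub_lt_sub_right (Odd.strictMono_pow (by decide) hxy) _) hc)
    (by norm_num)

lemma hasDerivAt_div_cube_sub_cube (b c x : ℝ) :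
    HasDerivAt (fun y : ℝ => (y ^ 3 - b ^ 3) / c) (3 * x ^ 2 / c) x := by
  simpa using ((hasDerivAt_pow 3 x).sub_const (b ^ 3)).div_const c

lemma hasDerivAt_cbrtDiffCubes (hc : 0 < c) (hx : b < x) :
    HasDerivAt (cbrtDiffCubes b c) (x ^ 2 / c * ((x ^ 3 - b ^ 3) / c) ^ (-(2 : ℝ) / 3)) x := by
  refine ((hasDerivAt_div_cube_sub_cube b c x).rpow_const (p := 1 / 3)
    (Or.inl (div_cube_sub_cube_pos hc hx).ne')).congr_deriv ?_
  rw [show (1 : ℝ) / 3 - 1 = -(2 : ℝ) / 3 by norm_num]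
  ring

lemma hasDerivAt_deriv_cbrtDiffCubes (hc : 0 < c) (hx : b < x) :
    HasDerivAt (deriv (cbrtDiffCubes b c))
      (-(2 * x * b ^ 3 / c ^ 2) * ((x ^ 3 - b ^ 3) / c) ^ (-(5 : ℝ) / 3)) x := by
  set u := (x ^ 3 - b ^ 3) / c with hu
  have hu_pos : 0 < u := div_cube_sub_cube_pos hc hx
  have hderiv : deriv (cbrtDiffCubes b c) =ᶠ[nhds x]
      fun y => y ^ 2 / c * ((y ^ 3 - b ^ 3) / c) ^ (-(2 : ℝ) / 3) :=
    Filter.eventuallyEq_of_mem (Ioi_mem_nhds hx) fun y hy => (hasDerivAt_cbrtDiffCubes hc hy).deriv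
  refine HasDerivAt.congr_of_eventuallyEq ?_ hderiv
  refine (((hasDerivAt_pow 2 x).div_const c).mul
    ((hasDerivAt_div_cube_sub_cube b c x).rpow_const (p := -(2 : ℝ) / 3)
      (Or.inl hu_pos.ne'))).congr_deriv ?_
  have hsplit : u ^ (-(2 : ℝ) / 3) = u * u ^ (-(5 : ℝ) / 3) := by
    rw [← Real.rpow_one_add' hu_pos.le (by norm_num)]
    norm_num
  rw [hsplit, show -(2 : ℝ) / 3 - 1 = -(5 : ℝ) / 3 by norm_num, hu]
  field_simp
  ring

lemma strictConcaveOn_cbrtDiffCubes (hb : 0 < b) (hc : 0 < c) :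
    StrictConcaveOn ℝ (Ioi b) (cbrtDiffCubes b c) := by
  refine strictConcaveOn_of_deriv2_neg (convex_Ioi b)
    (fun x hx => (hasDerivAt_cbrtDiffCubes hc hx).continuousAt.continuousWithinAt) ?_
  intro x hx
  rw [interior_Ioi] at hx
  rw [Function.iterate_succ_apply, Function.iterate_one,
    (hasDerivAt_deriv_cbrtDiffCubes hc hx).deriv]
  have hx_pos : 0 < x := hb.trans hx
  exact mul_neg_of_neg_of_pos (neg_neg_of_pos (by positivity))
    (Real.rpow_pos_of_pos (div_cube_sub_cube_pos hc hx) _)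

end CbrtDiffCubes

/-- `Ψ_ε(r) = −1−M + (((1+r+M)³ − ε³(1+M)³)/(1−ε³))^{1/3}` is strictly increasing and
strictly concave on `(r_ε, ∞)` with `r_ε = −(1+M)(1−ε)`. -/
theorem stmt_17 (M ε : ℝ) (hM : 0 ≤ M) (hε : ε ∈ Set.Ioo (0 : ℝ) 1) :
    StrictMonoOn
      (fun r : ℝ => -1 - M +
        (((1 + r + M) ^ 3 - ε ^ 3 * (1 + M) ^ 3) / (1 - ε ^ 3)) ^ ((1 : ℝ) / 3))
      (Set.Ioi (-((1 + M) * (1 - ε)))) ∧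
    StrictConcaveOn ℝ (Set.Ioi (-((1 + M) * (1 - ε))))
      (fun r : ℝ => -1 - M +
        (((1 + r + M) ^ 3 - ε ^ 3 * (1 + M) ^ 3) / (1 - ε ^ 3)) ^ ((1 : ℝ) / 3)) := by
  obtain ⟨hε0, hε1⟩ := hε
  have hb : 0 < ε * (1 + M) := mul_pos hε0 (by linarith)
  have hc : 0 < 1 - ε ^ 3 := sub_pos.2 (pow_lt_one₀ hε0.le hε1 (by norm_num))
  have hΨ : (fun r : ℝ => -1 - M +
      (((1 + r + M) ^ 3 - ε ^ 3 * (1 + M) ^ 3) / (1 - ε ^ 3)) ^ ((1 : ℝ) / 3)) =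
      (cbrtDiffCubes (ε * (1 + M)) (1 - ε ^ 3) ∘ fun r => r + (1 + M)) + fun _ => -1 - M := by
    funext r
    simp only [Pi.add_apply, Function.comp_apply, cbrtDiffCubes, mul_pow]
    ring_nf
  have hdom : Ioi (-((1 + M) * (1 - ε))) = (fun r => (1 + M) + r) ⁻¹' Ioi (ε * (1 + M)) := by
    ext r
    simp only [mem_Ioi, mem_preimage]
    constructor <;> intro <;> linarith
  rw [hΨ, hdom]
  refine ⟨fun r hr s hs hrs => ?_,
    ((strictConcaveOn_cbrtDiffCubes hb hc).translate_left (1 + M)).add_const (-1 - M)⟩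
  simp only [mem_preimage, add_comm (1 + M)] at hr hs
  exact add_lt_add_left (strictMonoOn_cbrtDiffCubes hc hr hs (by linarith)) _
end

section
/- Let M > 0 and ε ∈ (0,1). Set r_ε := −(1+M)(1−ε), define for r > r_ε the functions Ψ_ε(r) := −1−M + (((1+r+M)³ − ε³·(1+M)³)/(1−ε³))^{1/3} and Ψ_ε'(r) := (1+r+M)² / ((1−ε³)^{1/3}·((1+r+M)³ − ε³·(1+M)³)^{2/3}), and set ρ_ε := (ε³·(1+M)³ + (1−ε³)·M³)^{1/3} − (1+M). Then for every r ∈ [ρ_ε, 0] and every w ∈ [0, M]: (1−ε³)·Ψ_ε'(r)·(1 + Ψ_ε(r) + w)² ≤ (1 + r + w)². -/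
/-!
Write `A = 1 + r + M` and `b = Ψ_ε(r) + 1 + M = ((A³ − ε³(1+M)³)/(1−ε³))^{1/3}`. Since
`(1−ε³) b³ = A³ − ε³(1+M)³`, the factor `(1−ε³) Ψ_ε'(r)` is exactly `(A/b)²`, and the inequality
becomes `(A/b)(b + t) ≤ A + t` with `t = w − M ≤ 0`, i.e. `(A/b − 1) t ≤ 0`. This holds because
`r ≤ 0` gives `b ≤ A`, while `r ≥ ρ_ε` gives `b ≥ M`, so that `b + t ≥ 0`.
-/

lemma rpow_one_div_three_le_iff {x y : ℝ} (hx : 0 ≤ x) (hy : 0 ≤ y) :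
    x ^ ((1 : ℝ) / 3) ≤ y ↔ x ≤ y ^ 3 := by
  rw [one_div, Real.rpow_inv_le_iff_of_pos hx hy three_pos]
  norm_cast

lemma le_rpow_one_div_three_iff {x y : ℝ} (hx : 0 ≤ x) (hy : 0 ≤ y) :
    x ≤ y ^ ((1 : ℝ) / 3) ↔ x ^ 3 ≤ y := by
  rw [one_div, Real.le_rpow_inv_iff_of_pos hx hy three_pos]
  norm_cast

lemma mul_sq_div_rpow_mul_rpow_eq {A C D : ℝ} (hC : 0 < C) (hD : 0 < D) :
    D * (A ^ 2 / (D ^ ((1 : ℝ) / 3) * C ^ ((2 : ℝ) / 3))) = (A / (C / D) ^ ((1 : ℝ) / 3)) ^ 2 := by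
  have hD_split : D = D ^ ((1 : ℝ) / 3) * D ^ ((2 : ℝ) / 3) := by
    rw [← Real.rpow_add hD]
    norm_num
  have hroot_sq : ((C / D) ^ ((1 : ℝ) / 3)) ^ 2 = C ^ ((2 : ℝ) / 3) / D ^ ((2 : ℝ) / 3) := by
    rw [← Real.rpow_natCast, ← Real.rpow_mul (div_pos hC hD).le, Real.div_rpow hC.le hD.le]
    norm_num
  have hD13 : 0 < D ^ ((1 : ℝ) / 3) := Real.rpow_pos_of_pos hD _
  have hD23 : 0 < D ^ ((2 : ℝ) / 3) := Real.rpow_pos_of_pos hD _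
  have hC23 : 0 < C ^ ((2 : ℝ) / 3) := Real.rpow_pos_of_pos hC _
  rw [div_pow, hroot_sq]
  nth_rw 1 [hD_split]
  field_simp

lemma div_sq_mul_add_sq_le {A b t : ℝ} (hb : 0 < b) (hbA : b ≤ A) (ht : t ≤ 0)
    (hbt : 0 ≤ b + t) : (A / b) ^ 2 * (b + t) ^ 2 ≤ (A + t) ^ 2 := by
  rw [← mul_pow]
  apply pow_le_pow_left₀ (mul_nonneg (div_nonneg (hb.le.trans hbA) hb.le) hbt)
  rw [div_mul_eq_mul_div, div_le_iff₀ hb]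
  nlinarith

/-- Key subsolution estimate: for `r ∈ [ρ_ε, 0]` and `w ∈ [0, M]`,
`(1−ε³)·Ψ_ε′(r)·(1 + Ψ_ε(r) + w)² ≤ (1 + r + w)²`, where
`Ψ_ε(r) = −1−M + (((1+r+M)³ − ε³(1+M)³)/(1−ε³))^{1/3}`,
`Ψ_ε′(r) = (1+r+M)² / ((1−ε³)^{1/3}·((1+r+M)³ − ε³(1+M)³)^{2/3})`, and
`ρ_ε = (ε³(1+M)³ + (1−ε³)M³)^{1/3} − (1+M)`. -/
theorem stmt_19 (M ε : ℝ) (hM : 0 < M) (hε : ε ∈ Set.Ioo (0 : ℝ) 1) :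
    ∀ r ∈ Set.Icc ((ε ^ 3 * (1 + M) ^ 3 + (1 - ε ^ 3) * M ^ 3) ^ ((1 : ℝ) / 3) - (1 + M))
      (0 : ℝ), ∀ w ∈ Set.Icc (0 : ℝ) M,
      (1 - ε ^ 3) *
          ((1 + r + M) ^ 2 /
            ((1 - ε ^ 3) ^ ((1 : ℝ) / 3) *
              ((1 + r + M) ^ 3 - ε ^ 3 * (1 + M) ^ 3) ^ ((2 : ℝ) / 3))) *
          (1 + (-1 - M +
            (((1 + r + M) ^ 3 - ε ^ 3 * (1 + M) ^ 3) / (1 - ε ^ 3)) ^ ((1 : ℝ) / 3)) + w) ^ 2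
        ≤ (1 + r + w) ^ 2 := by
  rintro r ⟨hρr, hr0⟩ w ⟨hw0, hwM⟩
  obtain ⟨hε0, hε1⟩ := hε
  set A := 1 + r + M
  set C := A ^ 3 - ε ^ 3 * (1 + M) ^ 3
  have hD : 0 < 1 - ε ^ 3 := by nlinarith [pow_lt_one₀ hε0.le hε1 three_ne_zero]
  have hA : 0 ≤ A := by
    linarith [Real.rpow_nonneg (by positivity : 0 ≤ ε ^ 3 * (1 + M) ^ 3 + (1 - ε ^ 3) * M ^ 3)
      ((1 : ℝ) / 3)]
  have hρA : ε ^ 3 * (1 + M) ^ 3 + (1 - ε ^ 3) * M ^ 3 ≤ A ^ 3 :=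
    (rpow_one_div_three_le_iff (by positivity) hA).1 (by linarith)
  have hC : 0 < C := by nlinarith [pow_pos hM 3]
  have hMb : M ≤ (C / (1 - ε ^ 3)) ^ ((1 : ℝ) / 3) :=
    (le_rpow_one_div_three_iff hM.le (by positivity)).2 ((le_div_iff₀ hD).2 (by linarith))
  have hbA : (C / (1 - ε ^ 3)) ^ ((1 : ℝ) / 3) ≤ A := by
    have hA3 : A ^ 3 ≤ (1 + M) ^ 3 := pow_le_pow_left₀ hA (by linarith) 3
    exact (rpow_one_div_three_le_iff (by positivity) hA).2
      ((div_le_iff₀ hD).2 (by nlinarith [pow_pos hε0 3]))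
  rw [mul_sq_div_rpow_mul_rpow_eq hC hD]
  convert div_sq_mul_add_sq_le (t := w - M) (by linarith) hbA (by linarith) (by linarith)
    using 2 <;> ring
end
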